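/- arXiv:math/9510214 — 7 statements merged into one kernel-verified Lean document; each statement's English description precedes it below -/
import Mathlib

section
/- Let b : ℕ → ℝ satisfy b_k > 0 for all k ≥ 1. Then the series ∑_{k=1}^∞ b_k converges if and only if both polynomial sequences (U_n) and (V_n) converge locally uniformly on ℂ, i.e., there exist functions u, v : ℂ → ℂ such that U_n → u and V_n → v uniformly on every compact subset of ℂ; in that case u and v are entire (holomorphic on all of ℂ). -/
open Filter Topology


private lemma exp_prod_bound (a : ℕ → ℝ) (ha : ∀ k, 0 ≤ a k) (S : ℝ)
    (hS : ∀ n, ∑ k ∈ Finset.range n, a k ≤ S) (n : ℕ) :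
    ∏ k ∈ Finset.range n, (1 + a k) ≤ Real.exp S := by
  calc ∏ k ∈ Finset.range n, (1 + a k) ≤ ∏ k ∈ Finset.range n, Real.exp (a k) := by
        apply Finset.prod_le_prod
        · intro i _; have := ha i; linarith
        · intro i _; have := Real.add_one_le_exp (a i); linarith
    _ = Real.exp (∑ k ∈ Finset.range n, a k) := (Real.exp_sum _ _).symm
    _ ≤ Real.exp S := Real.exp_le_exp.2 (hS n)

private lemma W_bound (b : ℕ → ℝ) (hb : ∀ k, 1 ≤ k → 0 < b k)
    (hs : Summable fun k => b (k + 1))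
    (W : ℕ → ℂ → ℂ) (C : ℝ)
    (h0 : ∀ t, ‖W 0 t‖ ≤ C) (h1 : ∀ t, ‖W 1 t‖ ≤ C)
    (hrec : ∀ n t, W (n + 2) t = W (n + 1) t + (b (n + 1) : ℂ) * t * W n t) :
    ∀ n t, ‖W n t‖ ≤ C * Real.exp (‖t‖ * ∑' k, b (k + 1)) := by
  intro n t
  set S := ∑' k, b (k + 1) with hSdef
  have hbnn : ∀ k, 0 ≤ b (k + 1) := fun k => (hb (k + 1) (Nat.le_add_left 1 k)).le
  have hC : 0 ≤ C := le_trans (norm_nonneg _) (h0 t)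
  set a : ℕ → ℝ := fun k => b (k + 1) * ‖t‖ with hadef
  have hann : ∀ k, 0 ≤ a k := fun k => mul_nonneg (hbnn k) (norm_nonneg t)
  set P : ℕ → ℝ := fun m => ∏ k ∈ Finset.range m, (1 + a k) with hPdef
  have hP1 : ∀ m, (1 : ℝ) ≤ P m := by
    intro m
    induction m with
    | zero => simp [hPdef]
    | succ m ih =>
      have hPm : P (m + 1) = P m * (1 + a m) := Finset.prod_range_succ _ m
      nlinarith [hann m]
  have hPmono : ∀ m, P m ≤ P (m + 1) := by
    intro m
    have : P (m + 1) = P m * (1 + a m) := Finset.prod_range_succ _ m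
    nlinarith [hP1 m, hann m]
  have key : ∀ n, ‖W n t‖ ≤ C * P n ∧ ‖W (n + 1) t‖ ≤ C * P n := by
    intro n
    induction n with
    | zero =>
      constructor
      · simpa [hPdef] using h0 t
      · simpa [hPdef] using h1 t
    | succ n ih =>
      have hPm : P (n + 1) = P n * (1 + a n) := Finset.prod_range_succ _ n
      have hP : C * P n ≤ C * P (n + 1) := by nlinarith [hPmono n]
      constructor
      · exact ih.2.trans hP
      · rw [hrec]
        have hnorm : ‖(b (n + 1) : ℂ) * t * W n t‖ = b (n + 1) * ‖t‖ * ‖W n t‖ := by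
          rw [norm_mul, norm_mul, Complex.norm_real, Real.norm_eq_abs,
            abs_of_nonneg (hbnn n)]
        calc ‖W (n + 1) t + (b (n + 1) : ℂ) * t * W n t‖
            ≤ ‖W (n + 1) t‖ + ‖(b (n + 1) : ℂ) * t * W n t‖ := norm_add_le _ _
          _ = ‖W (n + 1) t‖ + a n * ‖W n t‖ := by rw [hnorm]
          _ ≤ C * P n + a n * (C * P n) := by
              have := ih.1; have := ih.2
              nlinarith [hann n, norm_nonneg (W n t)]
          _ = C * (P n * (1 + a n)) := by ring
          _ = C * P (n + 1) := by rw [hPm]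
  have hPexp : P n ≤ Real.exp (‖t‖ * S) := by
    apply exp_prod_bound a hann
    intro m
    have : ∑ k ∈ Finset.range m, a k = (∑ k ∈ Finset.range m, b (k + 1)) * ‖t‖ := by
      rw [Finset.sum_mul]
    rw [this]
    have hsum : ∑ k ∈ Finset.range m, b (k + 1) ≤ S := Summable.sum_le_tsum _ (fun i _ => hbnn i) hs
    calc (∑ k ∈ Finset.range m, b (k + 1)) * ‖t‖ ≤ S * ‖t‖ := by
          nlinarith [norm_nonneg t]
      _ = ‖t‖ * S := mul_comm _ _
  calc ‖W n t‖ ≤ C * P n := (key n).1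
    _ ≤ C * Real.exp (‖t‖ * S) := by nlinarith

private lemma W_forward (b : ℕ → ℝ) (hb : ∀ k, 1 ≤ k → 0 < b k)
    (hs : Summable fun k => b (k + 1))
    (W : ℕ → ℂ → ℂ) (C : ℝ)
    (h0 : ∀ t, ‖W 0 t‖ ≤ C) (h1 : ∀ t, ‖W 1 t‖ ≤ C)
    (hrec : ∀ n t, W (n + 2) t = W (n + 1) t + (b (n + 1) : ℂ) * t * W n t)
    (hd0 : Differentiable ℂ (W 0)) (hd1 : Differentiable ℂ (W 1)) :
    ∃ w : ℂ → ℂ, TendstoLocallyUniformly (fun n => W n) w atTop ∧ Differentiable ℂ w := by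
  set S := ∑' k, b (k + 1) with hSdef
  have hbnn : ∀ k, 0 ≤ b (k + 1) := fun k => (hb (k + 1) (Nat.le_add_left 1 k)).le
  have hSnn : 0 ≤ S := tsum_nonneg hbnn
  have hC : 0 ≤ C := le_trans (norm_nonneg _) (h0 0)
  set f : ℕ → ℂ → ℂ := fun k t => W (k + 1) t - W k t with hfdef
  set w : ℂ → ℂ := fun t => W 0 t + ∑' k, f k t with hwdef
  have htel : ∀ n t, W n t = W 0 t + ∑ k ∈ Finset.range n, f k t := by
    intro n t
    rw [Finset.sum_range_sub (fun k => W k t)]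
    ring
  have hdiff : ∀ n, Differentiable ℂ (W n) := by
    have key : ∀ n, Differentiable ℂ (W n) ∧ Differentiable ℂ (W (n + 1)) := by
      intro n
      induction n with
      | zero => exact ⟨hd0, hd1⟩
      | succ n ih =>
        refine ⟨ih.2, ?_⟩
        have heq : W (n + 2) = fun t => W (n + 1) t + (b (n + 1) : ℂ) * t * W n t :=
          funext (hrec n)
        rw [heq]
        exact ih.2.add (((differentiable_const _).mul differentiable_id).mul ih.1)
    exact fun n => (key n).1
  have hlu : TendstoLocallyUniformly (fun n => W n) w atTop := by
    rw [tendstoLocallyUniformly_iff_forall_isCompact]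
    intro K hK
    obtain ⟨r, hr⟩ := hK.isBounded.subset_closedBall 0
    set R := max r 0 with hRdef
    have hR : 0 ≤ R := le_max_right _ _
    have hKR : K ⊆ Metric.closedBall 0 R :=
      hr.trans (Metric.closedBall_subset_closedBall (le_max_left _ _))
    set M : ℕ → ℝ := fun k =>
      match k with
      | 0 => 2 * C
      | (k + 1) => b (k + 1) * (R * (C * Real.exp (R * S))) with hMdef
    have hM : Summable M := by
      rw [← summable_nat_add_iff 1]
      exact hs.mul_right _
    have hbound : ∀ k (x : ℂ), x ∈ K → ‖f k x‖ ≤ M k := by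
      intro k x hx
      have hxR : ‖x‖ ≤ R := by
        have := hKR hx
        simpa [Metric.mem_closedBall, dist_zero_right] using this
      match k with
      | 0 =>
        calc ‖W 1 x - W 0 x‖ ≤ ‖W 1 x‖ + ‖W 0 x‖ := norm_sub_le _ _
          _ ≤ 2 * C := by have := h0 x; have := h1 x; linarith
      | (k + 1) =>
        have heq : f (k + 1) x = (b (k + 1) : ℂ) * x * W k x := by
          show W (k + 2) x - W (k + 1) x = _
          rw [hrec]; ring
        rw [heq]
        have hnorm : ‖(b (k + 1) : ℂ) * x * W k x‖ = b (k + 1) * ‖x‖ * ‖W k x‖ := by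
          rw [norm_mul, norm_mul, Complex.norm_real, Real.norm_eq_abs, abs_of_nonneg (hbnn k)]
        rw [hnorm]
        have hWb : ‖W k x‖ ≤ C * Real.exp (‖x‖ * S) :=
          W_bound b hb hs W C h0 h1 hrec k x
        have hexp : Real.exp (‖x‖ * S) ≤ Real.exp (R * S) := by
          exact Real.exp_le_exp.2 (mul_le_mul_of_nonneg_right hxR hSnn)
        have hW2 : ‖W k x‖ ≤ C * Real.exp (R * S) := by nlinarith [Real.exp_pos (‖x‖ * S)]
        show b (k + 1) * ‖x‖ * ‖W k x‖ ≤ b (k + 1) * (R * (C * Real.exp (R * S)))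
        have h1' : (0:ℝ) ≤ b (k + 1) := hbnn k
        have h2' : ‖x‖ * ‖W k x‖ ≤ R * (C * Real.exp (R * S)) :=
          mul_le_mul hxR hW2 (norm_nonneg _) hR
        calc b (k + 1) * ‖x‖ * ‖W k x‖ = b (k + 1) * (‖x‖ * ‖W k x‖) := by ring
          _ ≤ b (k + 1) * (R * (C * Real.exp (R * S))) :=
            mul_le_mul_of_nonneg_left h2' h1'
    have htu := tendstoUniformlyOn_tsum_nat hM hbound
    rw [Metric.tendstoUniformlyOn_iff] at htu ⊢
    intro ε hε
    filter_upwards [htu ε hε] with n hn x hx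
    have := hn x hx
    rw [htel n x]
    show dist (w x) (W 0 x + ∑ k ∈ Finset.range n, f k x) < ε
    rw [hwdef]
    simpa [dist_add_left] using this
  refine ⟨w, hlu, ?_⟩
  rw [← differentiableOn_univ]
  exact TendstoLocallyUniformlyOn.differentiableOn
    ((tendstoLocallyUniformlyOn_univ).2 hlu)
    (Eventually.of_forall fun n => (hdiff n).differentiableOn) isOpen_univ


/-- **Stieltjes (1894).** For a Stieltjes continued fraction with positive
coefficients `b`, the convergence of `∑ b_k` is necessary and sufficient for the
locally uniform convergence on `ℂ` of the numerator polynomials `U_n` and the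
denominator polynomials `V_n` to (entire) limit functions `u` and `v`. -/
theorem stieltjes_separate_convergence
    (b : ℕ → ℝ) (hb : ∀ k, 1 ≤ k → 0 < b k)
    (U V : ℕ → ℂ → ℂ)
    (hU0 : ∀ t, U 0 t = 0) (hU1 : ∀ t, U 1 t = (b 0 : ℂ))
    (hV0 : ∀ t, V 0 t = 1) (hV1 : ∀ t, V 1 t = 1)
    (hU : ∀ n t, U (n + 2) t = U (n + 1) t + (b (n + 1) : ℂ) * t * U n t)
    (hV : ∀ n t, V (n + 2) t = V (n + 1) t + (b (n + 1) : ℂ) * t * V n t) :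
    (Summable fun k => b (k + 1)) ↔
      ∃ u v : ℂ → ℂ,
        TendstoLocallyUniformly (fun n => U n) u atTop ∧
        TendstoLocallyUniformly (fun n => V n) v atTop ∧
        Differentiable ℂ u ∧ Differentiable ℂ v := by
  constructor
  · intro hs
    have hU0' : ∀ t, ‖U 0 t‖ ≤ |b 0| := by intro t; simp [hU0]
    have hU1' : ∀ t, ‖U 1 t‖ ≤ |b 0| := by
      intro t; rw [hU1]; simp [Complex.norm_real]
    have hV0' : ∀ t, ‖V 0 t‖ ≤ (1 : ℝ) := by intro t; simp [hV0]
    have hV1' : ∀ t, ‖V 1 t‖ ≤ (1 : ℝ) := by intro t; simp [hV1]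
    have hUd0 : Differentiable ℂ (U 0) := by
      have : U 0 = fun _ => 0 := funext hU0
      rw [this]; exact differentiable_const _
    have hUd1 : Differentiable ℂ (U 1) := by
      have : U 1 = fun _ => (b 0 : ℂ) := funext hU1
      rw [this]; exact differentiable_const _
    have hVd0 : Differentiable ℂ (V 0) := by
      have : V 0 = fun _ => 1 := funext hV0
      rw [this]; exact differentiable_const _
    have hVd1 : Differentiable ℂ (V 1) := by
      have : V 1 = fun _ => 1 := funext hV1
      rw [this]; exact differentiable_const _
    obtain ⟨u, hu, hud⟩ := W_forward b hb hs U |b 0| hU0' hU1' hU hUd0 hUd1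
    obtain ⟨v, hv, hvd⟩ := W_forward b hb hs V 1 hV0' hV1' hV hVd0 hVd1
    exact ⟨u, v, hu, hv, hud, hvd⟩
  · rintro ⟨u, v, -, hv, -, -⟩
    -- use the pointwise convergence of `V n` at `t = 1`
    have hpt : Tendsto (fun n => V n 1) atTop (𝓝 (v 1)) := ((tendstoLocallyUniformlyOn_univ).2 hv).tendsto_at (Set.mem_univ 1)
    -- `V n 1` is a real number `≥ 1`, and the sequence is monotone
    have hreal : ∀ n, 1 ≤ (V n 1).re ∧ (V n 1).im = 0 := by
      have key : ∀ n, (1 ≤ (V n 1).re ∧ (V n 1).im = 0) ∧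
          (1 ≤ (V (n + 1) 1).re ∧ (V (n + 1) 1).im = 0) := by
        intro n
        induction n with
        | zero =>
          constructor
          · constructor <;> simp [hV0]
          · constructor <;> simp [hV1]
        | succ n ih =>
          refine ⟨ih.2, ?_⟩
          have hb' := (hb (n + 1) (Nat.le_add_left 1 n)).le
          rw [hV n 1]
          constructor
          · simp only [Complex.add_re, Complex.mul_re, Complex.mul_im, Complex.ofReal_re,
              Complex.ofReal_im, Complex.one_re, Complex.one_im]
            have h1 := ih.1; have h2 := ih.2
            nlinarith [h1.1, h1.2, h2.1, h2.2]
          · simp only [Complex.add_im, Complex.mul_re, Complex.mul_im, Complex.ofReal_re,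
              Complex.ofReal_im, Complex.one_re, Complex.one_im]
            have h1 := ih.1; have h2 := ih.2
            nlinarith [h1.1, h1.2, h2.1, h2.2]
      exact fun n => (key n).1
    set r : ℕ → ℝ := fun n => (V n 1).re with hrdef
    have hrmono : Monotone r := by
      apply monotone_nat_of_le_succ
      intro n
      match n with
      | 0 => simp [hrdef, hV0, hV1]
      | (n + 1) =>
        show (V (n + 1) 1).re ≤ (V (n + 2) 1).re
        rw [hV n 1]
        have hb' := (hb (n + 1) (Nat.le_add_left 1 n)).le
        simp only [Complex.add_re, Complex.mul_re, Complex.mul_im, Complex.ofReal_re,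
          Complex.ofReal_im, Complex.one_re, Complex.one_im]
        have h1 := hreal n
        nlinarith [h1.1, h1.2]
    have hrlim : Tendsto r atTop (𝓝 (v 1).re) := (Complex.continuous_re.tendsto _).comp hpt
    have hrle : ∀ n, r n ≤ (v 1).re := fun n => hrmono.ge_of_tendsto hrlim n
    -- the partial sums of `b (k+1)` are bounded
    apply summable_of_sum_range_le (fun k => (hb (k + 1) (Nat.le_add_left 1 k)).le)
    intro n
    have hstep : ∀ k, b (k + 1) ≤ r (k + 2) - r (k + 1) := by
      intro k
      have hb' := (hb (k + 1) (Nat.le_add_left 1 k)).le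
      have h1 := hreal k
      show b (k + 1) ≤ (V (k + 2) 1).re - (V (k + 1) 1).re
      rw [hV k 1]
      simp only [Complex.add_re, Complex.mul_re, Complex.mul_im, Complex.ofReal_re,
        Complex.ofReal_im, Complex.one_re, Complex.one_im]
      nlinarith [h1.1, h1.2]
    calc ∑ k ∈ Finset.range n, b (k + 1)
        ≤ ∑ k ∈ Finset.range n, (r (k + 2) - r (k + 1)) :=
          Finset.sum_le_sum fun k _ => hstep k
      _ = r (n + 1) - r 1 := by
          have := Finset.sum_range_sub (fun k => r (k + 1)) n
          simpa using this
      _ ≤ (v 1).re - 1 := by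
          have h1 : (1:ℝ) ≤ r 1 := (hreal 1).1
          have h2 := hrle (n + 1)
          linarith
      _ ≤ (v 1).re := by linarith
end

section
/- Let μ be a probability measure on ℝ with compact and infinite support, and let (p_n) be the orthonormal polynomials for μ. Then for every x ∈ ℝ: if the series ∑_{n=0}^∞ p_n(x)² diverges then μ({x}) = 0, and if it converges then μ({x}) = (∑_{n=0}^∞ p_n(x)²)^{-1}. -/
/-!
Write `K_n(x) = ∑_{k<n} p_k(x)²`. Since `p_0, …, p_{m-1}` is an orthonormal basis of the
polynomials of degree `< m`, Cauchy–Schwarz gives `q(x)² ≤ K_m(x) ∫ q² dμ` for such `q`, with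
equality for `q = ∑_{k<m} p_k(x) p_k`. Testing the latter against the atom at `x` gives
`μ{x} K_n(x) ≤ 1`, which forces `μ{x} = 0` when `K_n(x) → ∞`. Conversely, when
`K_n(x) → S < ∞`, the bound `q(x)² ≤ S ∫ q² dμ` passes by Weierstrass approximation (on an interval
carrying `μ`) to continuous functions, and Urysohn functions concentrating at `x` give
`1 ≤ S μ{x}`.
-/

open MeasureTheory Polynomial Filter Finset Topology

namespace Polynomial.Sequence

theorem exists_sum_smul_eq_of_degree_lt {K : Type*} [Field K] (S : Sequence K) {q : K[X]}
    {m : ℕ} (hq : q.degree < m) : ∃ c : ℕ → K, ∑ k ∈ range m, c k • S k = q := by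
  rw [← Submodule.mem_span_image_finset_iff_exists_fun', coe_range,
    S.span_degreeLT fun i _ => (leadingCoeff_ne_zero.2 (S.ne_zero i)).isUnit, mem_degreeLT]
  exact hq

end Polynomial.Sequence

theorem Polynomial.eval_sum_smul_sq {ι R : Type*} [CommSemiring R] (p : ι → R[X])
    (s : Finset ι) (c : ι → R) (t : R) :
    (∑ k ∈ s, c k • p k).eval t ^ 2
      = ∑ i ∈ s, ∑ j ∈ s, c i * c j * ((p i).eval t * (p j).eval t) := by
  simp only [eval_finsetSum, eval_smul, smul_eq_mul, sq, sum_mul_sum]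
  exact sum_congr rfl fun i _ => sum_congr rfl fun j _ => by ring

def L2Orthonormal (μ : Measure ℝ) (p : ℕ → ℝ[X]) : Prop :=
  ∀ n m, ∫ x, (p n).eval x * (p m).eval x ∂μ = if n = m then 1 else 0

namespace L2Orthonormal

variable {μ : Measure ℝ} {p : ℕ → ℝ[X]}

theorem ne_zero (hp : L2Orthonormal μ p) (n : ℕ) : p n ≠ 0 := by
  intro h
  simpa [h] using hp n n

theorem integrable_eval_sq (hp : L2Orthonormal μ p) (n : ℕ) :
    Integrable (fun t => (p n).eval t ^ 2) μ := by
  by_contra h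
  have h1 := hp n n
  simp [← sq, integral_undef h] at h1

theorem integrable_eval_mul_eval (hp : L2Orthonormal μ p) (i j : ℕ) :
    Integrable (fun t => (p i).eval t * (p j).eval t) μ :=
  have memLp : ∀ n, MemLp (fun t => (p n).eval t) 2 μ := fun n =>
    (memLp_two_iff_integrable_sq (p n).continuous.aestronglyMeasurable).2 (hp.integrable_eval_sq n)
  (memLp i).integrable_mul (memLp j)

theorem integrable_eval_sum_smul_sq (hp : L2Orthonormal μ p) (s : Finset ℕ) (c : ℕ → ℝ) :
    Integrable (fun t => (∑ k ∈ s, c k • p k).eval t ^ 2) μ := by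
  simp only [eval_sum_smul_sq]
  exact integrable_finsetSum _ fun i _ => integrable_finsetSum _ fun j _ =>
    (hp.integrable_eval_mul_eval i j).const_mul _

theorem integral_eval_sum_smul_sq (hp : L2Orthonormal μ p) (s : Finset ℕ) (c : ℕ → ℝ) :
    ∫ t, (∑ k ∈ s, c k • p k).eval t ^ 2 ∂μ = ∑ k ∈ s, c k ^ 2 := by
  have hint : ∀ i j, Integrable (fun t => c i * c j * ((p i).eval t * (p j).eval t)) μ :=
    fun i j => (hp.integrable_eval_mul_eval i j).const_mul _
  simp only [eval_sum_smul_sq]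
  rw [integral_finsetSum _ fun i _ => integrable_finsetSum _ fun j _ => hint i j]
  refine sum_congr rfl fun i hi => ?_
  simp_rw [integral_finsetSum _ fun j _ => hint i j, integral_const_mul, hp i]
  simp [hi, sq]

theorem eval_sq_le_sum_sq_mul_integral (hp : L2Orthonormal μ p)
    (hdeg : ∀ n, (p n).natDegree = n) {q : ℝ[X]} {m : ℕ} (hq : q.degree < m) (x : ℝ) :
    q.eval x ^ 2 ≤ (∑ k ∈ range m, (p k).eval x ^ 2) * ∫ t, q.eval t ^ 2 ∂μ := by
  let S : Sequence ℝ := ⟨p, fun n => (degree_eq_iff_natDegree_eq (hp.ne_zero n)).2 (hdeg n)⟩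
  obtain ⟨c, rfl⟩ := S.exists_sum_smul_eq_of_degree_lt hq
  rw [hp.integral_eval_sum_smul_sq, eval_finsetSum]
  simpa [mul_comm] using sum_mul_sq_le_sq_mul_sq (range m) (fun k => (p k).eval x) c

theorem eval_sq_le_tsum_mul_integral (hp : L2Orthonormal μ p)
    (hdeg : ∀ n, (p n).natDegree = n) {x : ℝ} (hsum : Summable fun n => (p n).eval x ^ 2)
    (q : ℝ[X]) :
    q.eval x ^ 2 ≤ (∑' n, (p n).eval x ^ 2) * ∫ t, q.eval t ^ 2 ∂μ :=
  (hp.eval_sq_le_sum_sq_mul_integral hdeg (m := q.natDegree + 1)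
    (degree_le_natDegree.trans_lt (by exact_mod_cast q.natDegree.lt_succ_self)) x).trans <|
    mul_le_mul_of_nonneg_right (hsum.sum_le_tsum _ fun n _ => sq_nonneg _)
      (integral_nonneg fun t => sq_nonneg _)

theorem measureReal_singleton_mul_sum_sq_le_one (hp : L2Orthonormal μ p) (x : ℝ) (n : ℕ) :
    μ.real {x} * ∑ k ∈ range n, (p k).eval x ^ 2 ≤ 1 := by
  have hle := setIntegral_le_integral (s := {x})
    (hp.integrable_eval_sum_smul_sq (range n) fun k => (p k).eval x)
    (.of_forall fun t => sq_nonneg _)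
  rw [integral_singleton, hp.integral_eval_sum_smul_sq, smul_eq_mul] at hle
  simp only [eval_finsetSum, eval_smul, smul_eq_mul, ← sq] at hle
  -- `hle` reads `μ{x} K² ≤ K` for `K = ∑ p_k(x)²`, the value at `x` of `∑ p_k(x) p_k`
  rcases (sum_nonneg fun k _ => sq_nonneg ((p k).eval x)).eq_or_lt with hK | hK
  · rw [← hK, mul_zero]
    exact zero_le_one
  · exact le_of_mul_le_mul_right (by nlinarith) hK

theorem measureReal_singleton_mul_tsum_le_one (hp : L2Orthonormal μ p) {x : ℝ}
    (hsum : Summable fun n => (p n).eval x ^ 2) :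
    μ.real {x} * ∑' n, (p n).eval x ^ 2 ≤ 1 :=
  le_of_tendsto' (hsum.hasSum.tendsto_sum_nat.const_mul _)
    (hp.measureReal_singleton_mul_sum_sq_le_one x)

theorem measure_singleton_eq_zero_of_not_summable [IsFiniteMeasure μ] (hp : L2Orthonormal μ p)
    {x : ℝ} (hsum : ¬ Summable fun n => (p n).eval x ^ 2) : μ {x} = 0 := by
  by_contra hne
  have htop := (not_summable_iff_tendsto_nat_atTop_of_nonneg fun n => sq_nonneg _).1 hsum
  have hpos : 0 < μ.real {x} := ENNReal.toReal_pos hne (measure_ne_top μ _)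
  obtain ⟨n, hn⟩ := ((htop.const_mul_atTop hpos).eventually_gt_atTop 1).exists
  exact (hp.measureReal_singleton_mul_sum_sq_le_one x n).not_gt hn

end L2Orthonormal

theorem exists_seq_polynomial_tendstoUniformlyOn {a b : ℝ} {f : ℝ → ℝ}
    (hf : ContinuousOn f (Set.Icc a b)) :
    ∃ q : ℕ → ℝ[X], TendstoUniformlyOn (fun j t => (q j).eval t) f atTop (Set.Icc a b) := by
  choose q hq using fun j : ℕ =>
    exists_polynomial_near_of_continuousOn a b f hf (1 / (j + 1)) Nat.one_div_pos_of_nat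
  refine ⟨q, Metric.tendstoUniformlyOn_iff.2 fun ε hε => ?_⟩
  obtain ⟨N, hN⟩ := exists_nat_one_div_lt hε
  filter_upwards [eventually_ge_atTop N] with j hj t ht
  rw [dist_comm, Real.dist_eq]
  calc |(q j).eval t - f t| < 1 / (j + 1) := hq j t ht
    _ ≤ 1 / (N + 1) := by gcongr
    _ < ε := hN

theorem sq_le_mul_integral_sq_of_forall_polynomial {μ : Measure ℝ} [IsFiniteMeasure μ]
    {K : Set ℝ} (hK : IsCompact K) (hKμ : μ Kᶜ = 0) {x C : ℝ}
    (hpoly : ∀ q : ℝ[X], q.eval x ^ 2 ≤ C * ∫ t, q.eval t ^ 2 ∂μ) (f : C(ℝ, ℝ)) :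
    f x ^ 2 ≤ C * ∫ t, f t ^ 2 ∂μ := by
  set I := Set.Icc (sInf (insert x K)) (sSup (insert x K))
  have hKI : insert x K ⊆ I := (hK.insert x).isBounded.subset_Icc_sInf_sSup
  have hI : ∀ᵐ t ∂μ, t ∈ I :=
    measure_mono_null (Set.compl_subset_compl.2 ((Set.subset_insert x K).trans hKI)) hKμ
  obtain ⟨q, hq⟩ := exists_seq_polynomial_tendstoUniformlyOn (f.continuous.continuousOn (s := I))
  obtain ⟨M, hM⟩ := isCompact_Icc.exists_bound_of_continuousOn f.continuous.continuousOn (s := I)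
  have hbound : ∀ᶠ j in atTop, ∀ᵐ t ∂μ, ‖(q j).eval t ^ 2‖ ≤ (M + 1) ^ 2 := by
    filter_upwards [Metric.tendstoUniformlyOn_iff.1 hq 1 one_pos] with j hj
    filter_upwards [hI] with t ht
    have hqM : |(q j).eval t| ≤ M + 1 := by
      have h1 := hj t ht
      have h2 := hM t ht
      rw [Real.dist_eq, abs_sub_comm] at h1
      rw [Real.norm_eq_abs] at h2
      linarith [abs_sub_abs_le_abs_sub ((q j).eval t) (f t)]
    rw [norm_pow, Real.norm_eq_abs]
    exact pow_le_pow_left₀ (abs_nonneg _) hqM 2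
  have hint : Tendsto (fun j => ∫ t, (q j).eval t ^ 2 ∂μ) atTop (𝓝 (∫ t, f t ^ 2 ∂μ)) :=
    tendsto_integral_filter_of_dominated_convergence _
      (.of_forall fun j => ((q j).continuous.pow 2).aestronglyMeasurable) hbound
      (integrable_const _) (hI.mono fun t ht => (hq.tendsto_at ht).pow 2)
  exact le_of_tendsto_of_tendsto' ((hq.tendsto_at (hKI (Set.mem_insert x K))).pow 2)
    (hint.const_mul C) fun j => hpoly (q j)

theorem one_le_mul_measureReal_singleton_of_forall_continuous {X : Type*} [MetricSpace X]
    [MeasurableSpace X] [OpensMeasurableSpace X] {μ : Measure X} [IsFiniteMeasure μ] {x : X}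
    {C : ℝ} (hcont : ∀ f : C(X, ℝ), f x ^ 2 ≤ C * ∫ t, f t ^ 2 ∂μ) :
    1 ≤ C * μ.real {x} := by
  have hC : 0 ≤ C := by
    have h1 := hcont 1
    simp only [ContinuousMap.one_apply, one_pow, integral_const, smul_eq_mul, mul_one] at h1
    nlinarith [measureReal_nonneg (μ := μ) (s := Set.univ)]
  have hball : ∀ δ > 0, 1 ≤ C * μ.real (Metric.ball x δ) := by
    intro δ hδ
    obtain ⟨f, hf0, hf1, hf01⟩ := exists_continuous_zero_one_of_isClosed
      Metric.isOpen_ball.isClosed_compl (isClosed_singleton (x := x))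
      (Set.disjoint_singleton_right.2 fun h => h (Metric.mem_ball_self hδ))
    have hsq : ∀ t, f t ^ 2 ≤ (Metric.ball x δ).indicator 1 t := by
      intro t
      by_cases ht : t ∈ Metric.ball x δ
      · simp only [Set.indicator_of_mem ht, Pi.one_apply]
        nlinarith [(hf01 t).1, (hf01 t).2]
      · simp [Set.indicator_of_notMem ht, hf0 ht]
    calc 1 = f x ^ 2 := by simp [hf1 (Set.mem_singleton x)]
      _ ≤ C * ∫ t, f t ^ 2 ∂μ := hcont f
      _ ≤ C * μ.real (Metric.ball x δ) := by
        gcongr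
        rw [← integral_indicator_one Metric.isOpen_ball.measurableSet]
        exact integral_mono_of_nonneg (.of_forall fun t => sq_nonneg _)
          ((integrable_const 1).indicator Metric.isOpen_ball.measurableSet) (.of_forall hsq)
  have hlim : Tendsto (fun δ => C * μ.real (Metric.ball x δ)) (𝓝[>] 0) (𝓝 (C * μ.real {x})) := by
    have := tendsto_measure_thickening_of_isClosed (μ := μ)
      ⟨1, one_pos, measure_ne_top μ _⟩ (isClosed_singleton (x := x))
    simp only [Metric.thickening_singleton] at this
    exact ((ENNReal.tendsto_toReal (measure_ne_top μ _)).comp this).const_mul C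
  exact ge_of_tendsto hlim (eventually_mem_nhdsWithin.mono hball)

theorem mass_point_eq_inv_sum_of_squares_general
    (μ : Measure ℝ) [IsProbabilityMeasure μ]
    (hcompact : ∃ K : Set ℝ, IsCompact K ∧ μ Kᶜ = 0)
    (p : ℕ → Polynomial ℝ)
    (hdeg : ∀ n, (p n).natDegree = n)
    (horth : ∀ n m, ∫ x, (p n).eval x * (p m).eval x ∂μ = if n = m then 1 else 0)
    (x : ℝ) :
    (¬ Summable (fun n => (p n).eval x ^ 2) → μ {x} = 0) ∧
      (Summable (fun n => (p n).eval x ^ 2) →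
        μ {x} = ENNReal.ofReal (∑' n, (p n).eval x ^ 2)⁻¹) := by
  have hp : L2Orthonormal μ p := horth
  refine ⟨hp.measure_singleton_eq_zero_of_not_summable, fun hsum => ?_⟩
  obtain ⟨K, hK, hKμ⟩ := hcompact
  have hupper := hp.measureReal_singleton_mul_tsum_le_one hsum
  have hlower := one_le_mul_measureReal_singleton_of_forall_continuous
    (sq_le_mul_integral_sq_of_forall_polynomial hK hKμ (hp.eval_sq_le_tsum_mul_integral hdeg hsum))
  rw [← ofReal_measureReal]
  exact congrArg ENNReal.ofReal (eq_inv_of_mul_eq_one_left (by linarith))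

/-- For orthonormal polynomials `p_n` of a probability measure `μ` on `ℝ` with
compact and infinite support, the mass of `μ` at a point `x` equals
`(∑ p_n(x)²)⁻¹`, interpreted as `0` when the series diverges. -/
theorem mass_point_eq_inv_sum_of_squares
    (μ : Measure ℝ) [IsProbabilityMeasure μ]
    (hcompact : ∃ K : Set ℝ, IsCompact K ∧ μ Kᶜ = 0)
    (hinfinite : ∀ S : Finset ℝ, μ ((S : Set ℝ)ᶜ) ≠ 0)
    (p : ℕ → Polynomial ℝ)
    (hdeg : ∀ n, (p n).natDegree = n)
    (hlead : ∀ n, 0 < (p n).leadingCoeff)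
    (horth : ∀ n m, ∫ x, (p n).eval x * (p m).eval x ∂μ = if n = m then 1 else 0)
    (x : ℝ) :
    (¬ Summable (fun n => (p n).eval x ^ 2) → μ {x} = 0) ∧
      (Summable (fun n => (p n).eval x ^ 2) →
        μ {x} = ENNReal.ofReal (∑' n, (p n).eval x ^ 2)⁻¹) :=
  mass_point_eq_inv_sum_of_squares_general μ hcompact p hdeg horth x
end

section
/- Let μ be a probability measure on ℝ with compact and infinite support, let n ≥ 1, and let p be a nonzero polynomial of degree n satisfying ∫ p q dμ = 0 for every polynomial q of degree less than n. If c < d are real numbers with μ([c, d]) = 0, then p has at most one zero in the interval [c, d]. -/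
/-!
If `p` vanished at two points `y ≠ z` of the gap, then `p = (X - y)(X - z) q` with `deg q < n`,
so `∫ p q dμ = 0`. But `p q = (x - y)(x - z) q²` is negative only between `y` and `z`, a
`μ`-null set, so `p q = 0` `μ`-a.e.; then `μ` would be carried by the finitely many roots of `p q`.
-/

open MeasureTheory Polynomial

theorem Polynomial.exists_eq_X_sub_C_mul_X_sub_C_mul {K : Type*} [Field K] {p : K[X]} {a b : K}
    (hab : a ≠ b) (ha : p.IsRoot a) (hb : p.IsRoot b) :
    ∃ q, p = (X - C a) * (X - C b) * q :=
  (isCoprime_X_sub_C_of_isUnit_sub (sub_ne_zero.2 hab).isUnit).mul_dvd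
    (dvd_iff_isRoot.2 ha) (dvd_iff_isRoot.2 hb)

theorem sub_mul_sub_nonneg_of_notMem_Icc {α : Type*} [Ring α] [LinearOrder α] [IsStrictOrderedRing α]
    {a b c d x : α} (ha : a ∈ Set.Icc c d) (hb : b ∈ Set.Icc c d) (hx : x ∉ Set.Icc c d) :
    0 ≤ (x - a) * (x - b) := by
  rcases not_and_or.1 hx with hxc | hxd
  · exact mul_nonneg_of_nonpos_of_nonpos (sub_nonpos.2 ((not_le.1 hxc).le.trans ha.1))
      (sub_nonpos.2 ((not_le.1 hxc).le.trans hb.1))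
  · exact mul_nonneg (sub_nonneg.2 (ha.2.trans (not_le.1 hxd).le))
      (sub_nonneg.2 (hb.2.trans (not_le.1 hxd).le))

theorem Continuous.integrable_of_isCompact_of_measure_compl_eq_zero {X E : Type*}
    [TopologicalSpace X] [T2Space X] [MeasurableSpace X] [OpensMeasurableSpace X]
    [NormedAddCommGroup E] {μ : Measure X} [IsFiniteMeasureOnCompacts μ] {f : X → E}
    (hf : Continuous f) {K : Set X} (hK : IsCompact K) (hKc : μ Kᶜ = 0) : Integrable f μ := by
  have hμK : μ.restrict K = μ := Measure.restrict_eq_self_of_ae_mem (mem_ae_iff.2 hKc)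
  simpa only [IntegrableOn, hμK] using hf.continuousOn.integrableOn_compact (μ := μ) hK

theorem Polynomial.eq_zero_of_integral_eval_eq_zero {μ : Measure ℝ}
    (hinfinite : ∀ S : Finset ℝ, μ ((S : Set ℝ)ᶜ) ≠ 0) {r : ℝ[X]}
    (hint : Integrable (fun x ↦ r.eval x) μ) (hnonneg : 0 ≤ᵐ[μ] fun x ↦ r.eval x)
    (hzero : ∫ x, r.eval x ∂μ = 0) : r = 0 := by
  by_contra hr
  have hae : ∀ᵐ x ∂μ, r.eval x = 0 := (integral_eq_zero_iff_of_nonneg_ae hnonneg hint).1 hzero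
  refine hinfinite r.roots.toFinset (measure_mono_null (fun x hx ↦ ?_) (ae_iff.1 hae))
  simpa [mem_roots hr] using hx

theorem orthogonal_polynomial_at_most_one_zero_in_gap_general
    (μ : Measure ℝ) [IsProbabilityMeasure μ]
    (hcompact : ∃ K : Set ℝ, IsCompact K ∧ μ Kᶜ = 0)
    (hinfinite : ∀ S : Finset ℝ, μ ((S : Set ℝ)ᶜ) ≠ 0)
    (n : ℕ) (p : Polynomial ℝ) (hp : p ≠ 0) (hdeg : p.natDegree = n)
    (horth : ∀ q : Polynomial ℝ, q.degree < n → ∫ x, p.eval x * q.eval x ∂μ = 0)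
    (c d : ℝ) (hμcd : μ (Set.Icc c d) = 0) :
    ∀ y ∈ Set.Icc c d, ∀ z ∈ Set.Icc c d, p.eval y = 0 → p.eval z = 0 → y = z := by
  intro y hy z hz hpy hpz
  by_contra hyz
  obtain ⟨q, hpq⟩ := exists_eq_X_sub_C_mul_X_sub_C_mul hyz hpy hpz
  have hq : q ≠ 0 := by rintro rfl; exact hp (by simpa using hpq)
  have hqdeg : q.degree < n := by
    rw [← natDegree_lt_iff_degree_lt hq, ← hdeg, hpq,
      natDegree_mul (mul_ne_zero (X_sub_C_ne_zero y) (X_sub_C_ne_zero z)) hq,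
      natDegree_mul (X_sub_C_ne_zero y) (X_sub_C_ne_zero z), natDegree_X_sub_C, natDegree_X_sub_C]
    omega
  have hnonneg : 0 ≤ᵐ[μ] fun x ↦ (p * q).eval x := by
    filter_upwards [measure_eq_zero_iff_ae_notMem.1 hμcd] with x hx
    have hpq_eval : (p * q).eval x = (x - y) * (x - z) * q.eval x ^ 2 := by
      simp only [hpq, eval_mul, eval_sub, eval_X, eval_C]
      ring
    rw [Pi.zero_apply, hpq_eval]
    exact mul_nonneg (sub_mul_sub_nonneg_of_notMem_Icc hy hz hx) (sq_nonneg _)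
  obtain ⟨K, hK, hKc⟩ := hcompact
  refine mul_ne_zero hp hq (eq_zero_of_integral_eval_eq_zero hinfinite ?_ hnonneg ?_)
  · exact (Polynomial.continuous _).integrable_of_isCompact_of_measure_compl_eq_zero hK hKc
  · simpa only [eval_mul] using horth q hqdeg

/-- An orthogonal polynomial of degree `n ≥ 1` for a probability measure `μ` on `ℝ`
with compact infinite support has at most one zero in any interval `[c, d]` of
`μ`-measure zero. -/
theorem orthogonal_polynomial_at_most_one_zero_in_gap
    (μ : Measure ℝ) [IsProbabilityMeasure μ]
    (hcompact : ∃ K : Set ℝ, IsCompact K ∧ μ Kᶜ = 0)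
    (hinfinite : ∀ S : Finset ℝ, μ ((S : Set ℝ)ᶜ) ≠ 0)
    (n : ℕ) (hn : 1 ≤ n) (p : Polynomial ℝ) (hp : p ≠ 0) (hdeg : p.natDegree = n)
    (horth : ∀ q : Polynomial ℝ, q.degree < n → ∫ x, p.eval x * q.eval x ∂μ = 0)
    (c d : ℝ) (hcd : c < d) (hμcd : μ (Set.Icc c d) = 0) :
    ∀ y ∈ Set.Icc c d, ∀ z ∈ Set.Icc c d, p.eval y = 0 → p.eval z = 0 → y = z :=
  orthogonal_polynomial_at_most_one_zero_in_gap_general μ hcompact hinfinite n p hp hdeg horth c d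
    hμcd
end

section
/- Let H be a complex Hilbert space, A a bounded self-adjoint operator on H, C a compact operator on H such that A + C is self-adjoint, and λ ∈ ℝ. Then there exists a sequence (u_n) in H with ‖u_n‖ = 1 for all n, ⟨y, u_n⟩ → 0 for every y ∈ H, and ‖A u_n − λ u_n‖ → 0, if and only if there exists a sequence (v_n) in H with ‖v_n‖ = 1 for all n, ⟨y, v_n⟩ → 0 for every y ∈ H, and ‖(A + C) v_n − λ v_n‖ → 0. (Weyl's theorem: a compact perturbation does not change the essential spectrum, characterized by singular Weyl sequences.) -/
/-!
A compact operator maps a weakly null bounded sequence to a norm-null one: every subsequence of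
the images has a norm-convergent subsequence, whose limit is also a weak limit and hence `0`.
So a singular Weyl sequence for `A` at `λ` is one for `A + C` as well, and conversely, since
`A = (A + C) + (-C)` with `-C` compact.
-/

open Filter Topology

section

variable {𝕜 E F : Type*} [RCLike 𝕜] [NormedAddCommGroup E] [InnerProductSpace 𝕜 E]
  [NormedAddCommGroup F] [InnerProductSpace 𝕜 F]

variable (𝕜) in
def WeaklyNull (u : ℕ → E) : Prop :=
  ∀ y : E, Tendsto (fun n => inner 𝕜 y (u n)) atTop (𝓝 0)

theorem WeaklyNull.comp_tendsto {u : ℕ → E} (hu : WeaklyNull 𝕜 u) {φ : ℕ → ℕ}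
    (hφ : Tendsto φ atTop atTop) : WeaklyNull 𝕜 (u ∘ φ) :=
  fun y => (hu y).comp hφ

theorem WeaklyNull.map [CompleteSpace E] [CompleteSpace F] {u : ℕ → E} (hu : WeaklyNull 𝕜 u)
    (T : E →L[𝕜] F) : WeaklyNull 𝕜 (fun n => T (u n)) := by
  intro y
  simpa only [ContinuousLinearMap.adjoint_inner_left] using hu (ContinuousLinearMap.adjoint T y)

theorem WeaklyNull.eq_zero_of_tendsto {u : ℕ → E} (hu : WeaklyNull 𝕜 u) {a : E}
    (ha : Tendsto u atTop (𝓝 a)) : a = 0 := by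
  have hlim : Tendsto (fun n => inner 𝕜 a (u n)) atTop (𝓝 (inner 𝕜 a a)) :=
    (continuous_const.inner continuous_id).continuousAt.tendsto.comp ha
  exact inner_self_eq_zero.mp (tendsto_nhds_unique hlim (hu a))

theorem IsCompactOperator.tendsto_zero_of_weaklyNull [CompleteSpace E] [CompleteSpace F]
    {T : E →L[𝕜] F} (hT : IsCompactOperator T) {u : ℕ → E} {r : ℝ} (hr : ∀ n, ‖u n‖ ≤ r)
    (hu : WeaklyNull 𝕜 u) : Tendsto (fun n => T (u n)) atTop (𝓝 0) := by
  obtain ⟨K, hK, hTK⟩ := hT.image_closedBall_subset_compact r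
  have hmem : ∀ n, T (u n) ∈ K := fun n =>
    hTK ⟨u n, mem_closedBall_zero_iff.mpr (hr n), rfl⟩
  refine tendsto_of_subseq_tendsto fun ψ hψ => ?_
  obtain ⟨a, -, φ, hφ, ha⟩ := hK.tendsto_subseq fun k => hmem (ψ k)
  have ha0 : a = 0 :=
    ((hu.map T).comp_tendsto (hψ.comp hφ.tendsto_atTop)).eq_zero_of_tendsto ha
  exact ⟨φ, ha0 ▸ ha⟩

variable (𝕜) in
def IsSingularWeylSequence (T : E →L[𝕜] E) (μ : 𝕜) (u : ℕ → E) : Prop :=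
  (∀ n, ‖u n‖ = 1) ∧ WeaklyNull 𝕜 u ∧ Tendsto (fun n => ‖T (u n) - μ • u n‖) atTop (𝓝 0)

theorem IsSingularWeylSequence.add_compact [CompleteSpace E] {A C : E →L[𝕜] E} {μ : 𝕜}
    {u : ℕ → E} (hu : IsSingularWeylSequence 𝕜 A μ u) (hC : IsCompactOperator C) :
    IsSingularWeylSequence 𝕜 (A + C) μ u := by
  obtain ⟨hnorm, hweak, hA⟩ := hu
  refine ⟨hnorm, hweak, ?_⟩
  have hCu : Tendsto (fun n => ‖C (u n)‖) atTop (𝓝 0) := by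
    simpa using (hC.tendsto_zero_of_weaklyNull (fun n => (hnorm n).le) hweak).norm
  refine squeeze_zero (fun n => norm_nonneg _) (fun n => ?_) (by simpa using hA.add hCu)
  calc ‖(A + C) (u n) - μ • u n‖ = ‖(A (u n) - μ • u n) + C (u n)‖ := by
        rw [add_apply, sub_add_eq_add_sub, add_sub_right_comm]
    _ ≤ ‖A (u n) - μ • u n‖ + ‖C (u n)‖ := norm_add_le _ _

end

theorem weyl_essential_spectrum_invariant_general
    {H : Type*} [NormedAddCommGroup H] [InnerProductSpace ℂ H] [CompleteSpace H]
    (A C : H →L[ℂ] H) (hC : IsCompactOperator ⇑C) (lam : ℝ) :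
    (∃ u : ℕ → H, (∀ n, ‖u n‖ = 1) ∧
        (∀ y : H, Tendsto (fun n => @inner ℂ _ _ y (u n)) atTop (nhds 0)) ∧
        Tendsto (fun n => ‖A (u n) - (lam : ℂ) • u n‖) atTop (nhds 0)) ↔
      (∃ v : ℕ → H, (∀ n, ‖v n‖ = 1) ∧
        (∀ y : H, Tendsto (fun n => @inner ℂ _ _ y (v n)) atTop (nhds 0)) ∧
        Tendsto (fun n => ‖(A + C) (v n) - (lam : ℂ) • v n‖) atTop (nhds 0)) := by
  constructor
  · rintro ⟨u, hu⟩
    exact ⟨u, IsSingularWeylSequence.add_compact hu hC⟩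
  · rintro ⟨v, hv⟩
    have hA : IsSingularWeylSequence ℂ (A + C + -C) lam v :=
      IsSingularWeylSequence.add_compact hv hC.neg
    exact ⟨v, by rwa [add_neg_cancel_right] at hA⟩

/-- **Weyl's theorem on compact perturbations**, stated via singular Weyl
sequences: a real number `λ` admits a singular Weyl sequence for `A` if and only
if it admits one for `A + C`, where `C` is compact and both `A` and `A + C` are
self-adjoint. -/
theorem weyl_essential_spectrum_invariant
    {H : Type*} [NormedAddCommGroup H] [InnerProductSpace ℂ H] [CompleteSpace H]
    (A C : H →L[ℂ] H) (hA : IsSelfAdjoint A) (hC : IsCompactOperator ⇑C)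
    (hAC : IsSelfAdjoint (A + C)) (lam : ℝ) :
    (∃ u : ℕ → H, (∀ n, ‖u n‖ = 1) ∧
        (∀ y : H, Tendsto (fun n => @inner ℂ _ _ y (u n)) atTop (nhds 0)) ∧
        Tendsto (fun n => ‖A (u n) - (lam : ℂ) • u n‖) atTop (nhds 0)) ↔
      (∃ v : ℕ → H, (∀ n, ‖v n‖ = 1) ∧
        (∀ y : H, Tendsto (fun n => @inner ℂ _ _ y (v n)) atTop (nhds 0)) ∧
        Tendsto (fun n => ‖(A + C) (v n) - (lam : ℂ) • v n‖) atTop (nhds 0)) :=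
  weyl_essential_spectrum_invariant_general A C hC lam
end

section
/- Let k ≥ 1 and let (y_n) be a sequence of complex numbers satisfying the linear recurrence y_{n+k} = ∑_{j=0}^{k-1} a_{j,n} y_{n+j} for all n ≥ 0, where the complex coefficients satisfy a_{j,n} → a_j as n → ∞ for each 0 ≤ j < k. Suppose the characteristic equation z^k = ∑_{j=0}^{k-1} a_j z^j has k roots ξ_1, …, ξ_k whose absolute values are pairwise distinct. Then either there exists n_0 such that y_n = 0 for all n ≥ n_0, or there exists a root ξ_ℓ of the characteristic equation such that y_n ≠ 0 for all sufficiently large n and y_{n+1}/y_n → ξ_ℓ. (Poincaré's theorem.) -/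
/-!
Write `w n` for the coordinates of the window `(y n, …, y (n + k - 1))` in the basis of initial
windows of the geometric solutions `ξ_i ^ n` of the limiting recurrence, i.e. apply the inverse of
the transposed Vandermonde matrix. This basis diagonalizes the limiting companion shift, so
`w (n + 1) = ξ * w n + o(‖w n‖)`.

Let `ℓ n` be a coordinate carrying the sup norm `‖w n‖`. Eventually `ℓ` can only jump to roots of
strictly larger modulus, so it stabilizes at some `L`. For `j ≠ L` the share
`t n = ‖w n j‖ / ‖w n‖` then satisfies `‖ξ L‖ t (n + 1) = ‖ξ j‖ t n + o(1)` with
`‖ξ L‖ ≠ ‖ξ j‖`, which forces `t n → 0`. Hence `y n = ∑ i, w n i` is asymptotic to `w n L`,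
and `y (n + 1) - ξ L * y n = o(w n L)`.
-/

open Filter Topology Asymptotics Function Matrix

lemma eventually_atTop_of_eventually_succ {P : ℕ → Prop} (h : ∀ᶠ n in atTop, P (n + 1)) :
    ∀ᶠ n in atTop, P n := by
  rw [← map_add_atTop_eq_nat 1]
  exact h

lemma tendsto_zero_of_eventually_le_mul_add {t : ℕ → ℝ} {q : ℝ} (hq₀ : 0 ≤ q) (hq₁ : q < 1)
    (ht₀ : ∀ n, 0 ≤ t n) (ht₁ : ∀ n, t n ≤ 1)
    (step : ∀ d c, 0 < c → (∀ᶠ n in atTop, t n ≤ d) → ∀ᶠ n in atTop, t n ≤ q * d + c) :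
    Tendsto t atTop (𝓝 0) := by
  have bound : ∀ d > 0, ∀ p : ℕ, ∀ᶠ n in atTop, t n ≤ q ^ p + d := by
    intro d hd p
    induction p with
    | zero => exact .of_forall fun n => by linarith [ht₁ n]
    | succ p ih =>
      filter_upwards [step _ ((1 - q) * d) (by nlinarith) ih] with n hn
      linarith [show q * (q ^ p + d) + (1 - q) * d = q ^ (p + 1) + d by ring]
  refine tendsto_order.2 ⟨fun a ha => .of_forall fun n => ha.trans_le (ht₀ n), fun d hd => ?_⟩
  obtain ⟨p, hp⟩ := ((tendsto_pow_atTop_nhds_zero_of_lt_one hq₀ hq₁).eventually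
    (gt_mem_nhds (half_pos hd))).exists
  filter_upwards [bound (d / 2) (half_pos hd) p] with n hn
  linarith

/-- For `a < b` this is a contraction forward in time, for `b < a` one backward in time. -/
lemma tendsto_zero_of_abs_mul_succ_sub_mul_le {t : ℕ → ℝ} {a b : ℝ} (ha : 0 ≤ a) (hb : 0 ≤ b)
    (hab : a ≠ b) (ht₀ : ∀ n, 0 ≤ t n) (ht₁ : ∀ n, t n ≤ 1)
    (h : ∀ c > 0, ∀ᶠ n in atTop, |b * t (n + 1) - a * t n| ≤ c) : Tendsto t atTop (𝓝 0) := by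
  rcases hab.lt_or_gt with hlt | hgt
  · have hb' : 0 < b := ha.trans_lt hlt
    refine tendsto_zero_of_eventually_le_mul_add (div_nonneg ha hb'.le) ((div_lt_one hb').2 hlt)
      ht₀ ht₁ fun d c hc hd => eventually_atTop_of_eventually_succ ?_
    filter_upwards [h (b * c) (mul_pos hb' hc), hd] with n hn htd
    rw [div_mul_eq_mul_div, div_add' _ _ _ hb'.ne', le_div_iff₀ hb']
    nlinarith [(abs_le.1 hn).2, mul_le_mul_of_nonneg_left htd ha]
  · have ha' : 0 < a := hb.trans_lt hgt
    refine tendsto_zero_of_eventually_le_mul_add (div_nonneg hb ha'.le) ((div_lt_one ha').2 hgt)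
      ht₀ ht₁ fun d c hc hd => ?_
    filter_upwards [h (a * c) (mul_pos ha' hc), (tendsto_add_atTop_nat 1).eventually hd]
      with n hn htd
    rw [div_mul_eq_mul_div, div_add' _ _ _ ha'.ne', le_div_iff₀ ha']
    nlinarith [(abs_le.1 hn).1, mul_le_mul_of_nonneg_left htd hb]

lemma exists_eventually_eq_of_eventually_le_succ {ι β : Type*} [Finite ι] [PartialOrder β]
    {r : ι → β} (hr : Injective r) {ℓ : ℕ → ι} (h : ∀ᶠ n in atTop, r (ℓ n) ≤ r (ℓ (n + 1))) :
    ∃ L, ∀ᶠ n in atTop, ℓ n = L := by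
  obtain ⟨N, hN⟩ := eventually_atTop.1 h
  let g : ℕ →o Set.range r :=
    ⟨fun n => ⟨r (ℓ (N + n)), Set.mem_range_self _⟩,
      monotone_nat_of_le_succ fun n => hN (N + n) (Nat.le_add_right N n)⟩
  obtain ⟨n₀, hn₀⟩ := wellFoundedGT_iff_monotone_chain_condition.1 Finite.to_wellFoundedGT g
  refine ⟨ℓ (N + n₀), eventually_atTop.2 ⟨N + n₀, fun n hn => hr ?_⟩⟩
  have := congrArg Subtype.val (hn₀ (n - N) (by omega))
  simp only [g, OrderHom.coe_mk] at this
  rw [this, Nat.add_sub_cancel' (by omega)]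

section DiagonalSystem

variable {ι 𝕜 : Type*} [Fintype ι] [NormedField 𝕜] {ξ : ι → 𝕜} {w : ℕ → ι → 𝕜}

lemma eventually_abs_norm_succ_sub_le (hpert : (fun n => w (n + 1) - ξ * w n) =o[atTop] w)
    {c : ℝ} (hc : 0 < c) :
    ∀ᶠ n in atTop, ∀ i, |‖w (n + 1) i‖ - ‖ξ i‖ * ‖w n i‖| ≤ c * ‖w n‖ := by
  filter_upwards [hpert.bound hc] with n hn i
  calc |‖w (n + 1) i‖ - ‖ξ i‖ * ‖w n i‖| = |‖w (n + 1) i‖ - ‖ξ i * w n i‖| := by rw [norm_mul]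
    _ ≤ ‖w (n + 1) i - ξ i * w n i‖ := abs_norm_sub_norm_le _ _
    _ ≤ ‖w (n + 1) - ξ * w n‖ := norm_le_pi_norm (w (n + 1) - ξ * w n) i
    _ ≤ c * ‖w n‖ := hn

lemma exists_eventually_norm_apply_eq_norm (hξ : Injective (‖ξ ·‖)) (hw : ∀ n, w n ≠ 0)
    (hpert : (fun n => w (n + 1) - ξ * w n) =o[atTop] w) :
    ∃ L, ∀ᶠ n in atTop, ‖w n L‖ = ‖w n‖ := by
  have : Nonempty ι := by
    obtain ⟨i, -⟩ := Function.ne_iff.1 (hw 0)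
    exact ⟨i⟩
  have hmax : ∀ n, ∃ i, ‖w n i‖ = ‖w n‖ := fun n => (IsGreatest.pi_norm (w n)).1
  choose ℓ hℓ using hmax
  -- If `‖ξ j‖ < ‖ξ i‖`, coordinate `i` would outgrow `j` in one step.
  have no_descent : ∀ i j, ∀ᶠ n in atTop, ℓ n = i → ℓ (n + 1) = j → ‖ξ i‖ ≤ ‖ξ j‖ := by
    intro i j
    rcases le_or_gt ‖ξ i‖ ‖ξ j‖ with hij | hji
    · exact .of_forall fun _ _ _ => hij
    have hc : 0 < (‖ξ i‖ - ‖ξ j‖) / 3 := by linarith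
    filter_upwards [eventually_abs_norm_succ_sub_le hpert hc] with n hn hi hj
    subst hi hj
    have h₁ := abs_le.1 (hn (ℓ n))
    have h₂ := abs_le.1 (hn (ℓ (n + 1)))
    have h₃ := mul_le_mul_of_nonneg_left (norm_le_pi_norm (w n) (ℓ (n + 1)))
      (norm_nonneg (ξ (ℓ (n + 1))))
    have h₄ := norm_le_pi_norm (w (n + 1)) (ℓ n)
    rw [hℓ n] at h₁
    rw [← hℓ (n + 1)] at h₄
    nlinarith [mul_pos hc (norm_pos_iff.2 (hw n))]
  have mono : ∀ᶠ n in atTop, ‖ξ (ℓ n)‖ ≤ ‖ξ (ℓ (n + 1))‖ := by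
    filter_upwards [eventually_all.2 fun i => eventually_all.2 (no_descent i)] with n hn
    exact hn _ _ rfl rfl
  obtain ⟨L, hL⟩ := exists_eventually_eq_of_eventually_le_succ hξ mono
  exact ⟨L, hL.mono fun n hn => hn ▸ hℓ n⟩

lemma isLittleO_apply_of_eventually_norm_eq (hξ : Injective (‖ξ ·‖)) (hw : ∀ n, w n ≠ 0)
    (hpert : (fun n => w (n + 1) - ξ * w n) =o[atTop] w) {L : ι}
    (hL : ∀ᶠ n in atTop, ‖w n L‖ = ‖w n‖) {j : ι} (hj : j ≠ L) :
    (fun n => w n j) =o[atTop] (fun n => w n L) := by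
  have hpos : ∀ n, 0 < ‖w n‖ := fun n => norm_pos_iff.2 (hw n)
  set t : ℕ → ℝ := fun n => ‖w n j‖ / ‖w n‖
  have ht₀ : ∀ n, 0 ≤ t n := fun n => by positivity
  have ht₁ : ∀ n, t n ≤ 1 := fun n => div_le_one_of_le₀ (norm_le_pi_norm _ _) (hpos n).le
  have ht : Tendsto t atTop (𝓝 0) := by
    refine tendsto_zero_of_abs_mul_succ_sub_mul_le (norm_nonneg (ξ j)) (norm_nonneg (ξ L))
      (hξ.ne hj) ht₀ ht₁ fun c hc => ?_
    filter_upwards [eventually_abs_norm_succ_sub_le hpert (half_pos hc), hL,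
      (tendsto_add_atTop_nat 1).eventually hL] with n hn hLn hLn'
    have hm := hpos n
    have hm' := hpos (n + 1)
    have hL' := hn L
    rw [hLn, hLn', abs_sub_comm] at hL'
    have key : ‖ξ L‖ * t (n + 1) - ‖ξ j‖ * t n =
        (t (n + 1) * (‖ξ L‖ * ‖w n‖ - ‖w (n + 1)‖) + (‖w (n + 1) j‖ - ‖ξ j‖ * ‖w n j‖)) /
          ‖w n‖ := by
      simp only [t]
      field_simp
      ring
    rw [key, abs_div, abs_of_pos hm, div_le_iff₀ hm]
    calc |t (n + 1) * (‖ξ L‖ * ‖w n‖ - ‖w (n + 1)‖) + (‖w (n + 1) j‖ - ‖ξ j‖ * ‖w n j‖)|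
        ≤ |t (n + 1)| * |‖ξ L‖ * ‖w n‖ - ‖w (n + 1)‖| + |‖w (n + 1) j‖ - ‖ξ j‖ * ‖w n j‖| := by
          rw [← abs_mul]
          exact abs_add_le _ _
      _ ≤ 1 * (c / 2 * ‖w n‖) + c / 2 * ‖w n‖ := by
          gcongr
          · exact (abs_of_nonneg (ht₀ _)).trans_le (ht₁ _)
          · exact hn j
      _ = c * ‖w n‖ := by ring
  refine IsLittleO.of_bound fun c hc => ?_
  filter_upwards [ht.eventually (ge_mem_nhds hc), hL] with n htn hLn
  rw [hLn, ← div_le_iff₀ (hpos n)]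
  exact htn

lemma tendsto_sum_succ_div_sum (hw : ∀ n, w n ≠ 0)
    (hpert : (fun n => w (n + 1) - ξ * w n) =o[atTop] w) {L : ι}
    (hL : ∀ᶠ n in atTop, ‖w n L‖ = ‖w n‖)
    (hsmall : ∀ j ≠ L, (fun n => w n j) =o[atTop] (fun n => w n L)) :
    (∀ᶠ n in atTop, ∑ i, w n i ≠ 0) ∧
      Tendsto (fun n => (∑ i, w (n + 1) i) / ∑ i, w n i) atTop (𝓝 (ξ L)) := by
  classical
  have hwL : w =O[atTop] (fun n => w n L) :=
    IsBigO.of_bound 1 (hL.mono fun n hn => by rw [hn, one_mul])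
  have hequiv : (fun n => ∑ i, w n i) ~[atTop] (fun n => w n L) := by
    have : (fun n => ∑ i, w n i - w n L) = fun n => ∑ i ∈ Finset.univ.erase L, w n i := by
      ext n
      rw [← Finset.add_sum_erase _ _ (Finset.mem_univ L), add_sub_cancel_left]
    rw [IsEquivalent, Pi.sub_def, this]
    exact IsLittleO.fun_sum fun j hj => hsmall j (Finset.ne_of_mem_erase hj)
  have hnum : (fun n => ∑ i, w (n + 1) i - ξ L * ∑ i, w n i) =o[atTop] (fun n => w n L) := by
    have : (fun n => ∑ i, w (n + 1) i - ξ L * ∑ i, w n i) = fun n =>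
        ∑ i, ((w (n + 1) - ξ * w n) i + (ξ i - ξ L) * w n i) := by
      ext n
      simp only [Finset.mul_sum, ← Finset.sum_sub_distrib, Pi.sub_apply, Pi.mul_apply]
      exact Finset.sum_congr rfl fun i _ => by ring
    rw [this]
    refine IsLittleO.fun_sum fun i _ => IsLittleO.add ?_ ?_
    · exact ((isBigO_pi.1 (isBigO_refl _ _) i).trans_isLittleO hpert).trans_isBigO hwL
    · rcases eq_or_ne i L with rfl | hi
      · simp only [sub_self, zero_mul]
        exact isLittleO_zero _ _
      · exact (hsmall i hi).const_mul_left _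
  have hne : ∀ᶠ n in atTop, ∑ i, w n i ≠ 0 := by
    filter_upwards [hequiv.symm.isBigO.eq_zero_imp, hL] with n hn hLn hzero
    exact hw n (norm_eq_zero.1 (hLn ▸ norm_eq_zero.2 (hn hzero)))
  refine ⟨hne, ?_⟩
  have hratio := ((hnum.trans_isBigO hequiv.symm.isBigO).tendsto_div_nhds_zero).const_add (ξ L)
  rw [add_zero] at hratio
  refine hratio.congr' (hne.mono fun n hn => ?_)
  field_simp
  ring

end DiagonalSystem

lemma Matrix.isBigO_mulVec {α 𝕜 m n : Type*} [NontriviallyNormedField 𝕜] [CompleteSpace 𝕜]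
    [Fintype m] [Fintype n] (P : Matrix m n 𝕜) (f : α → n → 𝕜) (l : Filter α) :
    (fun x => P *ᵥ f x) =O[l] f :=
  (LinearMap.toContinuousLinearMap (mulVecLin P)).isBigO_comp f l

def window {R : Type*} (k : ℕ) (y : ℕ → R) (n : ℕ) : Fin k → R := fun p => y (n + p)

lemma eq_zero_of_window_eq_zero {R : Type*} [CommSemiring R] {k : ℕ} {y : ℕ → R}
    {A : Fin k → ℕ → R} (hrec : ∀ n, y (n + k) = ∑ j, A j n * y (n + j)) {n₀ : ℕ}
    (h : window k y n₀ = 0) : ∀ n ≥ n₀, y n = 0 := by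
  intro n hn
  induction n using Nat.strong_induction_on with
  | _ n ih =>
    rcases lt_or_ge n (n₀ + k) with hlt | hge
    · simpa [window, Nat.add_sub_cancel' hn] using congrFun h ⟨n - n₀, by omega⟩
    · obtain ⟨m, rfl⟩ : ∃ m, n = m + k := ⟨n - k, by omega⟩
      rw [hrec m]
      exact Finset.sum_eq_zero fun j _ => by rw [ih _ (by omega) (by omega), mul_zero]

section VandermondeCoords

variable {R : Type*} [CommRing R] {k : ℕ} {ξ : Fin k → R}

/-- The columns of `(vandermonde ξ)ᵀ` are the initial windows of the sequences `n ↦ ξ i ^ n`. -/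
noncomputable def vandermondeCoords (ξ : Fin k → R) (y : ℕ → R) (n : ℕ) : Fin k → R :=
  ((vandermonde ξ)ᵀ)⁻¹ *ᵥ window k y n

lemma mulVec_vandermondeCoords (hξ : IsUnit ((vandermonde ξ)ᵀ).det) (y : ℕ → R) (n : ℕ) :
    (vandermonde ξ)ᵀ *ᵥ vandermondeCoords ξ y n = window k y n := by
  rw [vandermondeCoords, mulVec_mulVec, mul_nonsing_inv _ hξ, one_mulVec]

lemma vandermondeCoords_ne_zero (hξ : IsUnit ((vandermonde ξ)ᵀ).det) (y : ℕ → R) {n : ℕ}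
    (h : window k y n ≠ 0) : vandermondeCoords ξ y n ≠ 0 :=
  fun h0 => h (by rw [← mulVec_vandermondeCoords hξ y n, h0, mulVec_zero])

lemma sum_vandermondeCoords (hξ : IsUnit ((vandermonde ξ)ᵀ).det) (y : ℕ → R) (hk : 0 < k)
    (n : ℕ) : ∑ i, vandermondeCoords ξ y n i = y n := by
  simpa [mulVec, dotProduct, window] using congrFun (mulVec_vandermondeCoords hξ y n) ⟨0, hk⟩

end VandermondeCoords

namespace LinearRecurrence

section CommRing

variable {R : Type*} [CommRing R] (E : LinearRecurrence R)

lemma window_succ_sub_tupleSucc (y : ℕ → R) (n : ℕ) :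
    window E.order y (n + 1) - E.tupleSucc (window E.order y n) = fun p : Fin E.order =>
      if (p : ℕ) + 1 < E.order then 0 else y (n + E.order) - ∑ j, E.coeffs j * y (n + j) := by
  ext p
  simp only [Pi.sub_apply, window, tupleSucc, LinearMap.coe_mk, AddHom.coe_mk]
  split_ifs with h
  · rw [add_assoc, add_comm 1, sub_self]
  · rw [show n + 1 + p = n + E.order by omega]

lemma tupleSucc_mulVec_vandermonde {ξ : Fin E.order → R}
    (hroot : ∀ i, ξ i ^ E.order = ∑ j, E.coeffs j * ξ i ^ (j : ℕ)) (v : Fin E.order → R) :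
    E.tupleSucc ((vandermonde ξ)ᵀ *ᵥ v) = (vandermonde ξ)ᵀ *ᵥ (ξ * v) := by
  ext p
  simp only [tupleSucc, LinearMap.coe_mk, AddHom.coe_mk, mulVec, dotProduct, transpose_apply,
    vandermonde_apply, Pi.mul_apply]
  split_ifs with h
  · exact Finset.sum_congr rfl fun i _ => by ring
  · have hp : (p : ℕ) + 1 = E.order := by omega
    simp_rw [Finset.mul_sum]
    rw [Finset.sum_comm]
    refine Finset.sum_congr rfl fun i _ => ?_
    rw [← mul_assoc, ← pow_succ, hp, hroot i, Finset.sum_mul]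
    exact Finset.sum_congr rfl fun j _ => by ring

lemma vandermondeCoords_succ_sub {ξ : Fin E.order → R}
    (hroot : ∀ i, ξ i ^ E.order = ∑ j, E.coeffs j * ξ i ^ (j : ℕ))
    (hξ : IsUnit ((vandermonde ξ)ᵀ).det) (y : ℕ → R) (n : ℕ) :
    vandermondeCoords ξ y (n + 1) - ξ * vandermondeCoords ξ y n =
      ((vandermonde ξ)ᵀ)⁻¹ *ᵥ (window E.order y (n + 1) - E.tupleSucc (window E.order y n)) := by
  rw [mulVec_sub, ← mulVec_vandermondeCoords hξ y n, E.tupleSucc_mulVec_vandermonde hroot,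
    mulVec_mulVec, nonsing_inv_mul _ hξ, one_mulVec]
  rfl

end CommRing

section Asymptotics

variable {𝕜 : Type*} [NormedField 𝕜] {E : LinearRecurrence 𝕜} {y : ℕ → 𝕜}

lemma isLittleO_sub_sum_coeffs_mul {A : Fin E.order → ℕ → 𝕜}
    (hrec : ∀ n, y (n + E.order) = ∑ j, A j n * y (n + j))
    (hlim : ∀ j, Tendsto (A j) atTop (𝓝 (E.coeffs j))) :
    (fun n => y (n + E.order) - ∑ j, E.coeffs j * y (n + j)) =o[atTop] window E.order y := by
  simp_rw [hrec, ← Finset.sum_sub_distrib, ← sub_mul]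
  refine IsLittleO.fun_sum fun j _ => ?_
  have hA : (fun n => A j n - E.coeffs j) =o[atTop] (fun _ => (1 : ℝ)) :=
    (isLittleO_one_iff ℝ).2 (tendsto_sub_nhds_zero_iff.2 (hlim j))
  have hy : (fun n => y (n + j)) =O[atTop] (fun n => ‖window E.order y n‖) :=
    isBigO_of_le _ fun n => by
      rw [norm_norm]
      exact norm_le_pi_norm (window E.order y n) j
  simpa only [one_mul, isLittleO_norm_right] using hA.mul_isBigO hy

lemma isLittleO_window_succ_sub_tupleSucc
    (h : (fun n => y (n + E.order) - ∑ j, E.coeffs j * y (n + j)) =o[atTop] window E.order y) :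
    (fun n => window E.order y (n + 1) - E.tupleSucc (window E.order y n)) =o[atTop]
      window E.order y := by
  refine IsBigO.trans_isLittleO (isBigO_of_le _ fun n => ?_) h
  rw [window_succ_sub_tupleSucc]
  refine (pi_norm_le_iff_of_nonneg (norm_nonneg _)).2 fun p => ?_
  split_ifs
  · rw [norm_zero]
    exact norm_nonneg _
  · exact le_rfl

end Asymptotics

lemma isLittleO_vandermondeCoords_succ_sub {𝕜 : Type*} [NontriviallyNormedField 𝕜]
    [CompleteSpace 𝕜] {E : LinearRecurrence 𝕜} {y : ℕ → 𝕜}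
    {ξ : Fin E.order → 𝕜} (hroot : ∀ i, ξ i ^ E.order = ∑ j, E.coeffs j * ξ i ^ (j : ℕ))
    (hξ : IsUnit ((vandermonde ξ)ᵀ).det)
    (h : (fun n => y (n + E.order) - ∑ j, E.coeffs j * y (n + j)) =o[atTop] window E.order y) :
    (fun n => vandermondeCoords ξ y (n + 1) - ξ * vandermondeCoords ξ y n) =o[atTop]
      vandermondeCoords ξ y := by
  simp_rw [E.vandermondeCoords_succ_sub hroot hξ]
  have hwindow : window E.order y =O[atTop] vandermondeCoords ξ y := by
    simpa only [mulVec_vandermondeCoords hξ] using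
      isBigO_mulVec (vandermonde ξ)ᵀ (vandermondeCoords ξ y) atTop
  exact ((isBigO_mulVec _ _ _).trans_isLittleO
    (isLittleO_window_succ_sub_tupleSucc h)).trans_isBigO hwindow

end LinearRecurrence

theorem poincare_ratio_theorem_general
    (k : ℕ)
    (y : ℕ → ℂ) (A : Fin k → ℕ → ℂ) (α : Fin k → ℂ)
    (hrec : ∀ n : ℕ, y (n + k) = ∑ j : Fin k, A j n * y (n + (j : ℕ)))
    (hlim : ∀ j : Fin k, Tendsto (A j) atTop (nhds (α j)))
    (ξ : Fin k → ℂ)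
    (hroot : ∀ i : Fin k, ξ i ^ k = ∑ j : Fin k, α j * ξ i ^ (j : ℕ))
    (hdist : ∀ i j : Fin k, i ≠ j → ‖ξ i‖ ≠ ‖ξ j‖) :
    (∃ n₀ : ℕ, ∀ n ≥ n₀, y n = 0) ∨
      ∃ l : Fin k, (∃ N : ℕ, ∀ n ≥ N, y n ≠ 0) ∧
        Tendsto (fun n => y (n + 1) / y n) atTop (nhds (ξ l)) := by
  by_cases hzero : ∃ n₀, window k y n₀ = 0
  · obtain ⟨n₀, h⟩ := hzero
    exact Or.inl ⟨n₀, eq_zero_of_window_eq_zero hrec h⟩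
  have hnorm : Injective (‖ξ ·‖) := fun i j => not_imp_not.1 (hdist i j)
  have hdet : IsUnit ((vandermonde ξ)ᵀ).det := by
    rw [det_transpose, isUnit_iff_ne_zero, det_vandermonde_ne_zero_iff]
    exact hnorm.of_comp
  set w := vandermondeCoords ξ y
  have hw : ∀ n, w n ≠ 0 := fun n => vandermondeCoords_ne_zero hdet y (not_exists.1 hzero n)
  have hpert : (fun n => w (n + 1) - ξ * w n) =o[atTop] w :=
    LinearRecurrence.isLittleO_vandermondeCoords_succ_sub (E := ⟨k, α⟩) hroot hdet
      (LinearRecurrence.isLittleO_sub_sum_coeffs_mul hrec hlim)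
  obtain ⟨L, hL⟩ := exists_eventually_norm_apply_eq_norm hnorm hw hpert
  obtain ⟨hne, hratio⟩ := tendsto_sum_succ_div_sum hw hpert hL
    fun j hj => isLittleO_apply_of_eventually_norm_eq hnorm hw hpert hL hj
  have hy : ∀ n, ∑ i, w n i = y n := sum_vandermondeCoords hdet y L.pos
  simp only [hy] at hne hratio
  exact Or.inr ⟨L, eventually_atTop.1 hne, hratio⟩

/-- **Poincaré's theorem.** If `y` satisfies the linear recurrence
`y_{n+k} = ∑_{j<k} a_{j,n} y_{n+j}` with `a_{j,n} → a_j`, and the characteristic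
equation `z^k = ∑_{j<k} a_j z^j` has `k` roots `ξ_1, …, ξ_k` of pairwise distinct
moduli, then either `y_n = 0` eventually, or `y_n ≠ 0` eventually and the ratio
`y_{n+1}/y_n` converges to one of the roots. -/
theorem poincare_ratio_theorem
    (k : ℕ) (hk : 1 ≤ k)
    (y : ℕ → ℂ) (A : Fin k → ℕ → ℂ) (α : Fin k → ℂ)
    (hrec : ∀ n : ℕ, y (n + k) = ∑ j : Fin k, A j n * y (n + (j : ℕ)))
    (hlim : ∀ j : Fin k, Tendsto (A j) atTop (nhds (α j)))
    (ξ : Fin k → ℂ)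
    (hroot : ∀ i : Fin k, ξ i ^ k = ∑ j : Fin k, α j * ξ i ^ (j : ℕ))
    (hdist : ∀ i j : Fin k, i ≠ j → ‖ξ i‖ ≠ ‖ξ j‖) :
    (∃ n₀ : ℕ, ∀ n ≥ n₀, y n = 0) ∨
      ∃ l : Fin k, (∃ N : ℕ, ∀ n ≥ N, y n ≠ 0) ∧
        Tendsto (fun n => y (n + 1) / y n) atTop (nhds (ξ l)) :=
  poincare_ratio_theorem_general k y A α hrec hlim ξ hroot hdist
end

section
/- Let a > 0 and b ∈ ℝ, let (a_n)_{n≥1} and (b_n)_{n≥0} be real sequences with a_n > 0, a_n → a/2 and b_n → b, and let (p_n) be the associated orthonormal polynomials. Let x ∈ ℂ with x ∉ [b − a, b + a], and let ξ_1(x) = ((x − b) + √((x − b)² − a²))/a and ξ_2(x) = ((x − b) − √((x − b)² − a²))/a be the two roots of the characteristic equation a z² + 2(b − x) z + a = 0. Then p_n(x) ≠ 0 for all sufficiently large n, and the ratio p_{n+1}(x)/p_n(x) converges to ξ_1(x) or to ξ_2(x). -/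
open Filter Topology Polynomial

/-!
Put `u n = p_n(x)`. The three-term recurrence is a perturbation of the constant-coefficient
recurrence whose characteristic roots are `ξ₁, ξ₂`. Since `ξ₁ ξ₂ = 1`, equal moduli would put
both roots on the unit circle and `x = b + a Re ξ₁` in `[b - a, b + a]`; so `|ξ₂| < |ξ₁|`, say.
In the eigenbasis of the limiting companion matrix, the coordinates `s n, t n` of
`(u n, u (n + 1))` satisfy `s (n + 1) ≈ ξ₁ s n`, `t (n + 1) ≈ ξ₂ t n` up to errors
`o(max |s n| |t n|)`. By the gap between `|ξ₁|` and `|ξ₂|`, once `|t| ≤ |s|` this persists and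
`t / s → 0`; otherwise `|s| < |t|` forever and `s / t → 0`. Accordingly
`u (n + 1) / u n → ξ₁` or `ξ₂`.
-/

theorem tendsto_zero_of_le_mul_add {ρ β : ℕ → ℝ} {α : ℝ} (hα₀ : 0 ≤ α) (hα : α < 1)
    (hβ : Tendsto β atTop (𝓝 0)) (hρ : ∀ n, 0 ≤ ρ n)
    (hstep : ∀ᶠ n in atTop, ρ (n + 1) ≤ α * ρ n + β n) : Tendsto ρ atTop (𝓝 0) := by
  refine tendsto_order.2 ⟨fun ε hε => .of_forall fun n => hε.trans_le (hρ n), fun ε hε => ?_⟩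
  obtain ⟨N, hN⟩ := eventually_atTop.1
    (hstep.and (hβ.eventually_le_const (by nlinarith : 0 < ε / 2 * (1 - α))))
  have hdecay : ∀ n ≥ N, ρ n - ε / 2 ≤ α ^ (n - N) * (ρ N - ε / 2) := by
    intro n hn
    induction n, hn using Nat.le_induction with
    | base => simp
    | succ n hn ih =>
      obtain ⟨hρn, hβn⟩ := hN n hn
      calc ρ (n + 1) - ε / 2 ≤ α * (ρ n - ε / 2) := by linarith
        _ ≤ α * (α ^ (n - N) * (ρ N - ε / 2)) := mul_le_mul_of_nonneg_left ih hα₀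
        _ = α ^ (n + 1 - N) * (ρ N - ε / 2) := by rw [Nat.sub_add_comm hn, pow_succ]; ring
  have hpow : Tendsto (fun n => α ^ (n - N) * (ρ N - ε / 2)) atTop (𝓝 0) := by
    simpa using ((tendsto_pow_atTop_nhds_zero_of_lt_one hα₀ hα).comp
      (tendsto_sub_atTop_nat N)).mul_const (ρ N - ε / 2)
  filter_upwards [eventually_ge_atTop N, hpow.eventually_lt_const (half_pos hε)] with n hn hsmall
  linarith [hdecay n hn]

theorem tendsto_zero_of_le_mul_succ_add {σ β : ℕ → ℝ} {α C : ℝ} (hα₀ : 0 ≤ α) (hα : α < 1)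
    (hβ : Tendsto β atTop (𝓝 0)) (hσ : ∀ n, 0 ≤ σ n) (hσC : ∀ᶠ n in atTop, σ n ≤ C)
    (hstep : ∀ᶠ n in atTop, σ n ≤ α * σ (n + 1) + β n) : Tendsto σ atTop (𝓝 0) := by
  refine tendsto_order.2 ⟨fun ε hε => .of_forall fun n => hε.trans_le (hσ n), fun ε hε => ?_⟩
  obtain ⟨N, hN⟩ := eventually_atTop.1
    (hσC.and (hstep.and (hβ.eventually_le_const (by nlinarith : 0 < ε / 2 * (1 - α)))))
  have hdecay : ∀ k, ∀ n ≥ N, σ n - ε / 2 ≤ α ^ k * C := by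
    intro k
    induction k with
    | zero => intro n hn; linarith [(hN n hn).1]
    | succ k ih =>
      intro n hn
      obtain ⟨-, hσn, hβn⟩ := hN n hn
      calc σ n - ε / 2 ≤ α * (σ (n + 1) - ε / 2) := by linarith
        _ ≤ α * (α ^ k * C) := mul_le_mul_of_nonneg_left (ih (n + 1) (by omega)) hα₀
        _ = α ^ (k + 1) * C := by ring
  have hpow := (tendsto_pow_atTop_nhds_zero_of_lt_one hα₀ hα).mul_const C
  obtain ⟨k, hk⟩ :=
    (hpow.eventually_lt_const (show 0 * C < ε / 2 by simpa using half_pos hε)).exists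
  filter_upwards [eventually_ge_atTop N] with n hn
  linarith [hdecay k n hn]

section DominantComponent

variable {S T c : ℕ → ℝ} {L M : ℝ}

theorem eventually_pos_and_tendsto_div_of_eventually_le (hM : 0 ≤ M) (hML : M < L)
    (hS : ∀ n, 0 ≤ S n) (hT : ∀ n, 0 ≤ T n) (hST : ∀ n, 0 < max (S n) (T n))
    (hc : Tendsto c atTop (𝓝 0))
    (hS_succ : ∀ n, L * S n - c n * max (S n) (T n) ≤ S (n + 1))
    (hT_succ : ∀ n, T (n + 1) ≤ M * T n + c n * max (S n) (T n))
    (hle : ∀ᶠ n in atTop, T n ≤ S n) :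
    (∀ᶠ n in atTop, 0 < S n) ∧ Tendsto (fun n => T n / S n) atTop (𝓝 0) := by
  have hSpos : ∀ᶠ n in atTop, 0 < S n :=
    hle.mono fun n h => by simpa [max_eq_left h] using hST n
  refine ⟨hSpos, ?_⟩
  set δ := (L - M) / 2 with hδ
  have hLδ : 0 < L - δ := by linarith
  refine tendsto_zero_of_le_mul_add (α := M / (L - δ)) (β := fun n => c n / (L - δ))
    (div_nonneg hM hLδ.le) ((div_lt_one hLδ).2 (by linarith))
    (by simpa using hc.div_const (L - δ)) (fun n => div_nonneg (hT n) (hS n)) ?_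
  filter_upwards [hle, hSpos, hc.eventually_le_const (by linarith : (0 : ℝ) < δ)]
    with n hTSn hpos hcn
  have hmax : max (S n) (T n) = S n := max_eq_left hTSn
  have hS₁ : (L - δ) * S n ≤ S (n + 1) := by
    have := hS_succ n
    rw [hmax] at this
    nlinarith
  have hT₁ : T (n + 1) ≤ M * T n + c n * S n := by simpa [hmax] using hT_succ n
  calc T (n + 1) / S (n + 1) ≤ (M * T n + c n * S n) / ((L - δ) * S n) :=
        div_le_div₀ ((hT _).trans hT₁) hT₁ (by positivity) hS₁
    _ = M / (L - δ) * (T n / S n) + c n / (L - δ) := by field_simp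

theorem eventually_pos_and_tendsto_div_of_eventually_lt (hM : 0 ≤ M) (hML : M < L)
    (hS : ∀ n, 0 ≤ S n) (hT : ∀ n, 0 ≤ T n) (hc : Tendsto c atTop (𝓝 0))
    (hS_succ : ∀ n, L * S n - c n * max (S n) (T n) ≤ S (n + 1))
    (hT_succ : ∀ n, T (n + 1) ≤ M * T n + c n * max (S n) (T n))
    (hlt : ∀ᶠ n in atTop, S n < T n) :
    (∀ᶠ n in atTop, 0 < T n) ∧ Tendsto (fun n => S n / T n) atTop (𝓝 0) := by
  have hTpos : ∀ᶠ n in atTop, 0 < T n := hlt.mono fun n h => (hS n).trans_lt h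
  refine ⟨hTpos, ?_⟩
  set δ := (L - M) / 2 with hδ
  have hL : 0 < L := by linarith
  refine tendsto_zero_of_le_mul_succ_add (α := (M + δ) / L) (C := 1) (β := fun n => c n / L)
    (div_nonneg (by linarith) hL.le) ((div_lt_one hL).2 (by linarith))
    (by simpa using hc.div_const L)
    (fun n => div_nonneg (hS n) (hT n)) ?_ ?_
  · exact hlt.mono fun n h => (div_le_one ((hS n).trans_lt h)).2 h.le
  filter_upwards [hlt, (tendsto_add_atTop_nat 1).eventually hTpos,
    hc.eventually_le_const (by linarith : (0 : ℝ) < δ)] with n hSTn hT₁pos hcn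
  have hmax : max (S n) (T n) = T n := max_eq_right hSTn.le
  have hTn : 0 < T n := (hS n).trans_lt hSTn
  have hT₁ : T (n + 1) ≤ (M + δ) * T n := by
    have := hT_succ n
    rw [hmax] at this
    nlinarith
  have hS₁ : L * S n - c n * T n ≤ S (n + 1) := by simpa [hmax] using hS_succ n
  have hS₁' : S (n + 1) ≤ S (n + 1) / T (n + 1) * ((M + δ) * T n) := by
    rw [div_mul_eq_mul_div, le_div_iff₀ hT₁pos]
    exact mul_le_mul_of_nonneg_left hT₁ (hS _)
  rw [div_le_iff₀ hTn, show ((M + δ) / L * (S (n + 1) / T (n + 1)) + c n / L) * T n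
    = (S (n + 1) / T (n + 1) * ((M + δ) * T n) + c n * T n) / L by field_simp,
    le_div_iff₀ hL]
  linarith

theorem eventually_pos_and_tendsto_div_or (hM : 0 ≤ M) (hML : M < L)
    (hS : ∀ n, 0 ≤ S n) (hT : ∀ n, 0 ≤ T n) (hST : ∀ n, 0 < max (S n) (T n))
    (hc : Tendsto c atTop (𝓝 0))
    (hS_succ : ∀ n, L * S n - c n * max (S n) (T n) ≤ S (n + 1))
    (hT_succ : ∀ n, T (n + 1) ≤ M * T n + c n * max (S n) (T n)) :
    ((∀ᶠ n in atTop, 0 < S n) ∧ Tendsto (fun n => T n / S n) atTop (𝓝 0)) ∨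
      ((∀ᶠ n in atTop, 0 < T n) ∧ Tendsto (fun n => S n / T n) atTop (𝓝 0)) := by
  obtain ⟨N, hN⟩ := eventually_atTop.1
    (hc.eventually_le_const (by linarith : (0 : ℝ) < (L - M) / 2))
  by_cases h : ∃ m ≥ N, T m ≤ S m
  · obtain ⟨m, hm, hTS⟩ := h
    refine .inl (eventually_pos_and_tendsto_div_of_eventually_le hM hML hS hT hST hc hS_succ
      hT_succ (eventually_atTop.2 ⟨m, fun n hn => ?_⟩))
    -- Once `T ≤ S` with `c ≤ (L - M) / 2`, the gap `L - M` keeps `S` ahead.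
    induction n, hn using Nat.le_induction with
    | base => exact hTS
    | succ n hn ih =>
      have hS₁ := hS_succ n
      have hT₁ := hT_succ n
      rw [max_eq_left ih] at hS₁ hT₁
      nlinarith [mul_le_mul_of_nonneg_right (hN n (by omega)) (hS n),
        mul_le_mul_of_nonneg_left ih hM]
  · push Not at h
    exact .inr (eventually_pos_and_tendsto_div_of_eventually_lt hM hML hS hT hc hS_succ hT_succ
      (eventually_atTop.2 ⟨N, h⟩))

end DominantComponent

theorem ne_zero_or_succ_ne_zero_of_rec {R : Type*} [Semiring R] [NoZeroDivisors R]
    {u A B : ℕ → R} (hrec : ∀ n, u (n + 2) = A n * u (n + 1) + B n * u n)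
    (hB : ∀ n, B n ≠ 0) (hu₀ : u 0 ≠ 0) : ∀ n, u n ≠ 0 ∨ u (n + 1) ≠ 0 := by
  intro n
  induction n with
  | zero => exact .inl hu₀
  | succ n ih =>
    by_cases h : u (n + 1) = 0
    · refine .inr ?_
      rw [hrec n, h, mul_zero, zero_add]
      exact mul_ne_zero (hB n) (ih.resolve_right (not_not.2 h))
    · exact .inl h

section EigenCoord

variable {𝕜 : Type*} [NormedField 𝕜] {ξ₁ ξ₂ : 𝕜} {u : ℕ → 𝕜} {n : ℕ}

/-- The coordinate of `(u n, u (n + 1))` along the eigenvector `(1, ξ₁)` of the limiting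
companion matrix, in the eigenbasis `(1, ξ₁), (1, ξ₂)`. -/
def eigenCoord (ξ₁ ξ₂ : 𝕜) (u : ℕ → 𝕜) (n : ℕ) : 𝕜 :=
  (u (n + 1) - ξ₂ * u n) / (ξ₁ - ξ₂)

theorem eigenCoord_add_eigenCoord (h : ξ₁ ≠ ξ₂) :
    eigenCoord ξ₁ ξ₂ u n + eigenCoord ξ₂ ξ₁ u n = u n := by
  have h₁₂ := sub_ne_zero.2 h
  have h₂₁ := sub_ne_zero.2 h.symm
  simp only [eigenCoord]
  field_simp
  ring

theorem mul_eigenCoord_add_mul_eigenCoord (h : ξ₁ ≠ ξ₂) :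
    ξ₁ * eigenCoord ξ₁ ξ₂ u n + ξ₂ * eigenCoord ξ₂ ξ₁ u n = u (n + 1) := by
  have h₁₂ := sub_ne_zero.2 h
  have h₂₁ := sub_ne_zero.2 h.symm
  simp only [eigenCoord]
  field_simp
  ring

theorem norm_mul_add_mul_add_le (ξ₁ ξ₂ p q x y : 𝕜) :
    ‖p * (ξ₁ * x + ξ₂ * y) + q * (x + y)‖ ≤
      (‖p‖ * (‖ξ₁‖ + ‖ξ₂‖) + 2 * ‖q‖) * max ‖x‖ ‖y‖ := by
  have hx := le_max_left ‖x‖ ‖y‖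
  have hy := le_max_right ‖x‖ ‖y‖
  calc ‖p * (ξ₁ * x + ξ₂ * y) + q * (x + y)‖
      ≤ ‖p‖ * (‖ξ₁‖ * ‖x‖ + ‖ξ₂‖ * ‖y‖) + ‖q‖ * (‖x‖ + ‖y‖) := by
        refine (norm_add_le _ _).trans (add_le_add ?_ ?_) <;> rw [norm_mul] <;> gcongr
        · exact (norm_add_le _ _).trans_eq (by rw [norm_mul, norm_mul])
        · exact norm_add_le _ _
    _ ≤ ‖p‖ * (‖ξ₁‖ * max ‖x‖ ‖y‖ + ‖ξ₂‖ * max ‖x‖ ‖y‖) +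
          ‖q‖ * (max ‖x‖ ‖y‖ + max ‖x‖ ‖y‖) := by gcongr
    _ = (‖p‖ * (‖ξ₁‖ + ‖ξ₂‖) + 2 * ‖q‖) * max ‖x‖ ‖y‖ := by ring

theorem norm_eigenCoord_succ_sub_le (h : ξ₁ ≠ ξ₂) {A B : 𝕜}
    (hrec : u (n + 2) = A * u (n + 1) + B * u n) :
    ‖eigenCoord ξ₁ ξ₂ u (n + 1) - ξ₁ * eigenCoord ξ₁ ξ₂ u n‖ ≤
      (‖A - (ξ₁ + ξ₂)‖ * (‖ξ₁‖ + ‖ξ₂‖) + 2 * ‖B + ξ₁ * ξ₂‖) / ‖ξ₁ - ξ₂‖ *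
        max ‖eigenCoord ξ₁ ξ₂ u n‖ ‖eigenCoord ξ₂ ξ₁ u n‖ := by
  have hD := sub_ne_zero.2 h
  have hdefect : eigenCoord ξ₁ ξ₂ u (n + 1) - ξ₁ * eigenCoord ξ₁ ξ₂ u n =
      ((A - (ξ₁ + ξ₂)) * u (n + 1) + (B + ξ₁ * ξ₂) * u n) / (ξ₁ - ξ₂) := by
    simp only [eigenCoord]
    rw [hrec]
    field_simp
    ring
  rw [hdefect, norm_div, div_mul_eq_mul_div, div_le_div_iff_of_pos_right (norm_pos_iff.2 hD),
    ← mul_eigenCoord_add_mul_eigenCoord (u := u) (n := n) h,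
    ← eigenCoord_add_eigenCoord (u := u) (n := n) h]
  exact norm_mul_add_mul_add_le ..

theorem eventually_ne_zero_and_tendsto_div_of_eigenCoord (h : ξ₁ ≠ ξ₂)
    (hpos : ∀ᶠ n in atTop, 0 < ‖eigenCoord ξ₁ ξ₂ u n‖)
    (hlim : Tendsto (fun n => ‖eigenCoord ξ₂ ξ₁ u n‖ / ‖eigenCoord ξ₁ ξ₂ u n‖) atTop (𝓝 0)) :
    (∀ᶠ n in atTop, u n ≠ 0) ∧ Tendsto (fun n => u (n + 1) / u n) atTop (𝓝 ξ₁) := by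
  set s := eigenCoord ξ₁ ξ₂ u
  set t := eigenCoord ξ₂ ξ₁ u
  have hts : Tendsto (fun n => t n / s n) atTop (𝓝 0) :=
    tendsto_zero_iff_norm_tendsto_zero.2 (by simpa only [norm_div] using hlim)
  have hden : Tendsto (fun n => 1 + t n / s n) atTop (𝓝 1) := by simpa using hts.const_add 1
  have hnum : Tendsto (fun n => ξ₁ + ξ₂ * (t n / s n)) atTop (𝓝 ξ₁) := by
    simpa using (hts.const_mul ξ₂).const_add ξ₁
  have hev : ∀ᶠ n in atTop, s n ≠ 0 ∧ 1 + t n / s n ≠ 0 :=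
    (hpos.mono fun n => norm_pos_iff.1).and (hden.eventually_ne one_ne_zero)
  have hu : ∀ n, s n ≠ 0 → u n = s n * (1 + t n / s n) := fun n hs => by
    rw [← show s n + t n = u n from eigenCoord_add_eigenCoord h]
    field_simp
  have hu_succ : ∀ n, s n ≠ 0 → u (n + 1) = s n * (ξ₁ + ξ₂ * (t n / s n)) := fun n hs => by
    rw [← show ξ₁ * s n + ξ₂ * t n = u (n + 1) from mul_eigenCoord_add_mul_eigenCoord h]
    field_simp
  refine ⟨hev.mono fun n hn => hu n hn.1 ▸ mul_ne_zero hn.1 hn.2, ?_⟩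
  have hratio := hnum.div hden one_ne_zero
  rw [div_one] at hratio
  refine hratio.congr' ?_
  filter_upwards [hev] with n hn
  rw [Pi.div_apply, hu n hn.1, hu_succ n hn.1, mul_div_mul_left _ _ hn.1]

theorem eventually_ne_zero_and_tendsto_div_of_rec_of_norm_lt (hξ : ‖ξ₂‖ < ‖ξ₁‖) {A B : ℕ → 𝕜}
    (hrec : ∀ n, u (n + 2) = A n * u (n + 1) + B n * u n)
    (hA : Tendsto A atTop (𝓝 (ξ₁ + ξ₂))) (hB : Tendsto B atTop (𝓝 (-(ξ₁ * ξ₂))))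
    (hu : ∀ n, u n ≠ 0 ∨ u (n + 1) ≠ 0) :
    (∀ᶠ n in atTop, u n ≠ 0) ∧ (Tendsto (fun n => u (n + 1) / u n) atTop (𝓝 ξ₁) ∨
      Tendsto (fun n => u (n + 1) / u n) atTop (𝓝 ξ₂)) := by
  have h : ξ₁ ≠ ξ₂ := fun h => hξ.ne (by rw [h])
  set s := eigenCoord ξ₁ ξ₂ u
  set t := eigenCoord ξ₂ ξ₁ u
  set c : ℕ → ℝ := fun n =>
    (‖A n - (ξ₁ + ξ₂)‖ * (‖ξ₁‖ + ‖ξ₂‖) + 2 * ‖B n + ξ₁ * ξ₂‖) / ‖ξ₁ - ξ₂‖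
  have hc : Tendsto c atTop (𝓝 0) := by
    simpa using ((((hA.sub_const (ξ₁ + ξ₂)).norm).mul_const (‖ξ₁‖ + ‖ξ₂‖)).add
      (((hB.add_const (ξ₁ * ξ₂)).norm).const_mul 2)).div_const ‖ξ₁ - ξ₂‖
  have hs_succ : ∀ n, ‖ξ₁‖ * ‖s n‖ - c n * max ‖s n‖ ‖t n‖ ≤ ‖s (n + 1)‖ := fun n => by
    have := norm_sub_norm_le (ξ₁ * s n) (s (n + 1))
    rw [norm_mul, norm_sub_rev] at this
    linarith [norm_eigenCoord_succ_sub_le h (hrec n)]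
  have ht_succ : ∀ n, ‖t (n + 1)‖ ≤ ‖ξ₂‖ * ‖t n‖ + c n * max ‖s n‖ ‖t n‖ := fun n => by
    have := norm_eigenCoord_succ_sub_le h.symm (hrec n)
    rw [max_comm, add_comm ξ₂ ξ₁, mul_comm ξ₂ ξ₁, norm_sub_rev ξ₂ ξ₁, add_comm ‖ξ₂‖] at this
    have := norm_sub_norm_le (t (n + 1)) (ξ₂ * t n)
    rw [norm_mul] at this
    linarith
  have hst : ∀ n, 0 < max ‖s n‖ ‖t n‖ := fun n => by
    refine lt_max_iff.2 (by_contra fun hst => ?_)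
    simp only [not_or, not_lt, norm_le_zero_iff] at hst
    have := hu n
    rw [← eigenCoord_add_eigenCoord (u := u) (n := n) h,
      ← mul_eigenCoord_add_mul_eigenCoord (u := u) (n := n) h] at this
    simp [s, t, hst.1, hst.2] at this
  rcases eventually_pos_and_tendsto_div_or (norm_nonneg _) hξ (fun _ => norm_nonneg _)
      (fun _ => norm_nonneg _) hst hc hs_succ ht_succ with ⟨hpos, hlim⟩ | ⟨hpos, hlim⟩
  · exact (eventually_ne_zero_and_tendsto_div_of_eigenCoord h hpos hlim).imp_right .inl
  · exact (eventually_ne_zero_and_tendsto_div_of_eigenCoord h.symm hpos hlim).imp_right .inr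

/-- Poincaré's theorem, in order two. -/
theorem eventually_ne_zero_and_tendsto_div_of_rec (hξ : ‖ξ₁‖ ≠ ‖ξ₂‖) {A B : ℕ → 𝕜}
    (hrec : ∀ n, u (n + 2) = A n * u (n + 1) + B n * u n)
    (hA : Tendsto A atTop (𝓝 (ξ₁ + ξ₂))) (hB : Tendsto B atTop (𝓝 (-(ξ₁ * ξ₂))))
    (hu : ∀ n, u n ≠ 0 ∨ u (n + 1) ≠ 0) :
    (∀ᶠ n in atTop, u n ≠ 0) ∧ (Tendsto (fun n => u (n + 1) / u n) atTop (𝓝 ξ₁) ∨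
      Tendsto (fun n => u (n + 1) / u n) atTop (𝓝 ξ₂)) := by
  rcases hξ.lt_or_gt with hlt | hlt
  · rw [add_comm] at hA
    rw [mul_comm] at hB
    exact (eventually_ne_zero_and_tendsto_div_of_rec_of_norm_lt hlt hrec hA hB hu).imp_right
      Or.symm
  · exact eventually_ne_zero_and_tendsto_div_of_rec_of_norm_lt hlt hrec hA hB hu

end EigenCoord

theorem exists_add_eq_two_mul_of_mul_eq_one_of_norm_eq {ξ₁ ξ₂ : ℂ} (hprod : ξ₁ * ξ₂ = 1)
    (hnorm : ‖ξ₁‖ = ‖ξ₂‖) : ∃ θ ∈ Set.Icc (-1 : ℝ) 1, ξ₁ + ξ₂ = 2 * (θ : ℂ) := by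
  have hξ₁ : ‖ξ₁‖ = 1 := by
    have : ‖ξ₁‖ * ‖ξ₂‖ = 1 := by rw [← norm_mul, hprod, norm_one]
    rw [← hnorm] at this
    nlinarith [norm_nonneg ξ₁]
  have hconj : ξ₂ = starRingEnd ℂ ξ₁ := by
    refine mul_left_cancel₀ (norm_ne_zero_iff.1 (by rw [hξ₁]; exact one_ne_zero)) ?_
    rw [hprod, Complex.mul_conj, Complex.normSq_eq_norm_sq, hξ₁]
    norm_num
  refine ⟨ξ₁.re, abs_le.1 (hξ₁ ▸ Complex.abs_re_le_norm ξ₁), ?_⟩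
  rw [hconj, Complex.add_conj]
  push_cast
  ring

theorem mul_eq_one_and_add_eq_of_forall_eq {a b : ℝ} (ha : a ≠ 0) {x ξ₁ ξ₂ : ℂ}
    (hξ : ∀ z : ℂ, (a : ℂ) * z ^ 2 + 2 * ((b : ℂ) - x) * z + (a : ℂ) =
      (a : ℂ) * (z - ξ₁) * (z - ξ₂)) :
    ξ₁ * ξ₂ = 1 ∧ ξ₁ + ξ₂ = (x - b) / (a / 2) := by
  have ha' : (a : ℂ) ≠ 0 := Complex.ofReal_ne_zero.2 ha
  refine ⟨mul_left_cancel₀ ha' (by linear_combination -hξ 0), ?_⟩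
  field_simp
  linear_combination hξ 1 - hξ 0

theorem norm_ne_norm_of_forall_ne {a b : ℝ} (ha : 0 < a) {x ξ₁ ξ₂ : ℂ}
    (hprod : ξ₁ * ξ₂ = 1) (hsum : ξ₁ + ξ₂ = (x - b) / (a / 2))
    (hx : ∀ t : ℝ, t ∈ Set.Icc (b - a) (b + a) → x ≠ (t : ℂ)) : ‖ξ₁‖ ≠ ‖ξ₂‖ := fun hnorm => by
  obtain ⟨θ, ⟨hθ₁, hθ₂⟩, hθ⟩ := exists_add_eq_two_mul_of_mul_eq_one_of_norm_eq hprod hnorm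
  refine hx (b + a * θ) ⟨by nlinarith, by nlinarith⟩ ?_
  have ha' : (a : ℂ) ≠ 0 := Complex.ofReal_ne_zero.2 ha.ne'
  rw [hθ] at hsum
  field_simp at hsum
  push_cast
  linear_combination -hsum

theorem aeval_succ_succ_of_rec {an bn : ℕ → ℝ} {p : ℕ → ℝ[X]} {n : ℕ}
    (hrec : X * p (n + 1) =
      C (an (n + 2)) * p (n + 2) + C (bn (n + 1)) * p (n + 1) + C (an (n + 1)) * p n)
    (han : an (n + 2) ≠ 0) (x : ℂ) :
    aeval x (p (n + 2)) = (x - bn (n + 1)) / an (n + 2) * aeval x (p (n + 1)) +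
      -(an (n + 1) / an (n + 2) : ℂ) * aeval x (p n) := by
  have h := congrArg (aeval x) hrec
  simp only [map_add, map_mul, aeval_X, aeval_C, Complex.coe_algebraMap] at h
  have : (an (n + 2) : ℂ) ≠ 0 := Complex.ofReal_ne_zero.2 han
  field_simp
  linear_combination -h

theorem tendsto_coeffs_of_tendsto {a b : ℝ} (ha : a ≠ 0) {an bn : ℕ → ℝ}
    (hlima : Tendsto an atTop (𝓝 (a / 2))) (hlimb : Tendsto bn atTop (𝓝 b)) (x : ℂ) :
    Tendsto (fun n => (x - bn (n + 1)) / an (n + 2)) atTop (𝓝 ((x - b) / (a / 2))) ∧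
      Tendsto (fun n => -(an (n + 1) / an (n + 2) : ℂ)) atTop (𝓝 (-1)) := by
  have ha' : (a : ℂ) / 2 ≠ 0 := by simpa using ha
  have hlima' : Tendsto (fun n => (an (n + 1) : ℂ)) atTop (𝓝 (a / 2)) := by
    simpa using (hlima.comp (tendsto_add_atTop_nat 1)).ofReal
  refine ⟨(tendsto_const_nhds.sub (hlimb.comp (tendsto_add_atTop_nat 1)).ofReal).div
    (hlima'.comp (tendsto_add_atTop_nat 1)) ha', ?_⟩
  rw [← div_self ha']
  exact (hlima'.div (hlima'.comp (tendsto_add_atTop_nat 1)) ha').neg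

theorem ratio_asymptotics_Mab_general
    (a b : ℝ) (ha : 0 < a)
    (an bn : ℕ → ℝ) (hapos : ∀ n, 1 ≤ n → 0 < an n)
    (hlima : Tendsto an atTop (nhds (a / 2))) (hlimb : Tendsto bn atTop (nhds b))
    (p : ℕ → Polynomial ℝ) (hp0 : p 0 = 1)
    (hrec : ∀ n, X * p (n + 1) =
      C (an (n + 2)) * p (n + 2) + C (bn (n + 1)) * p (n + 1) + C (an (n + 1)) * p n)
    (x : ℂ) (hx : ∀ t : ℝ, t ∈ Set.Icc (b - a) (b + a) → x ≠ (t : ℂ))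
    (ξ₁ ξ₂ : ℂ)
    (hξ : ∀ z : ℂ, (a : ℂ) * z ^ 2 + 2 * ((b : ℂ) - x) * z + (a : ℂ) =
      (a : ℂ) * (z - ξ₁) * (z - ξ₂)) :
    (∃ N : ℕ, ∀ n ≥ N, Polynomial.aeval x (p n) ≠ 0) ∧
      (Tendsto (fun n => Polynomial.aeval x (p (n + 1)) / Polynomial.aeval x (p n))
          atTop (nhds ξ₁) ∨
        Tendsto (fun n => Polynomial.aeval x (p (n + 1)) / Polynomial.aeval x (p n))
          atTop (nhds ξ₂)) := by
  obtain ⟨hprod, hsum⟩ := mul_eq_one_and_add_eq_of_forall_eq ha.ne' hξ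
  obtain ⟨hA, hB⟩ := tendsto_coeffs_of_tendsto ha.ne' hlima hlimb x
  rw [← hsum] at hA
  rw [← hprod] at hB
  have han : ∀ n, an (n + 1) ≠ 0 := fun n => (hapos (n + 1) n.succ_pos).ne'
  have hrec' := fun n => aeval_succ_succ_of_rec (hrec n) (han (n + 1)) x
  have hu := ne_zero_or_succ_ne_zero_of_rec (u := fun n => aeval x (p n)) hrec'
    (fun n => by simp [han]) (by simp [hp0])
  obtain ⟨hne, hlim⟩ := eventually_ne_zero_and_tendsto_div_of_rec
    (norm_ne_norm_of_forall_ne ha hprod hsum hx) hrec' hA hB hu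
  exact ⟨eventually_atTop.1 hne, hlim⟩

/-- For orthonormal polynomials in the class `M(a,b)` and `x ∉ [b−a, b+a]`, the
ratio `p_{n+1}(x)/p_n(x)` converges to one of the two roots `ξ₁(x)`, `ξ₂(x)` of
the characteristic equation `a z² + 2(b − x) z + a = 0`. -/
theorem ratio_asymptotics_Mab
    (a b : ℝ) (ha : 0 < a)
    (an bn : ℕ → ℝ) (hapos : ∀ n, 1 ≤ n → 0 < an n)
    (hlima : Tendsto an atTop (nhds (a / 2))) (hlimb : Tendsto bn atTop (nhds b))
    (p : ℕ → Polynomial ℝ) (hp0 : p 0 = 1)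
    (hrec0 : X * p 0 = C (an 1) * p 1 + C (bn 0) * p 0)
    (hrec : ∀ n, X * p (n + 1) =
      C (an (n + 2)) * p (n + 2) + C (bn (n + 1)) * p (n + 1) + C (an (n + 1)) * p n)
    (x : ℂ) (hx : ∀ t : ℝ, t ∈ Set.Icc (b - a) (b + a) → x ≠ (t : ℂ))
    (ξ₁ ξ₂ : ℂ)
    (hξ : ∀ z : ℂ, (a : ℂ) * z ^ 2 + 2 * ((b : ℂ) - x) * z + (a : ℂ) =
      (a : ℂ) * (z - ξ₁) * (z - ξ₂)) :
    (∃ N : ℕ, ∀ n ≥ N, Polynomial.aeval x (p n) ≠ 0) ∧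
      (Tendsto (fun n => Polynomial.aeval x (p (n + 1)) / Polynomial.aeval x (p n))
          atTop (nhds ξ₁) ∨
        Tendsto (fun n => Polynomial.aeval x (p (n + 1)) / Polynomial.aeval x (p n))
          atTop (nhds ξ₂)) :=
  ratio_asymptotics_Mab_general a b ha an bn hapos hlima hlimb p hp0 hrec x hx ξ₁ ξ₂ hξ
end

section
/- Let b : ℕ → ℂ with b_n → 0 as n → ∞. Then there exist a set S ⊆ ℂ having no accumulation point in ℂ, and a function F holomorphic on ℂ \ S, such that the convergents U_n(t)/V_n(t) converge to F locally uniformly on ℂ \ S; thus the continued fraction converges to a function meromorphic on ℂ. (Van Vleck's extension of Stieltjes' theorem to complex coefficients; unlike the real positive case, the condition b_n → 0 is sufficient but not necessary.) -/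
open Filter Topology Metric

/-!
Fix `R > 0` and `n` with `‖b j‖ R ≤ 1/8` for `j > n`. Since `w ↦ c / (1 + w)` with `‖c‖ ≤ 1/8`
maps the disc `‖w‖ ≤ 1/2` into itself and contracts it by `1/2`, the finite tails
`b_{n+1} t/(1 + b_{n+2} t/(1 + ⋯))` converge uniformly on `‖t‖ < R` to a holomorphic `g`.
The recurrence gives `U_{n+1+k}/V_{n+1+k} = (U_{n+1} + τ U_n)/(V_{n+1} + τ V_n)` with `τ` the
depth-`k` tail, so the convergents converge locally uniformly to
`(U_{n+1} + g U_n)/(V_{n+1} + g V_n)` off the zeros of the denominator. That denominator is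
holomorphic and equals `1` at `t = 0`, so its zeros are isolated, and changing `n` only multiplies
it by a nonvanishing factor, so the zero sets for different `R` fit together.
-/

section MobiusBounds

variable {𝕜 : Type*} [NormedField 𝕜] {c u v : 𝕜}

theorem half_le_norm_one_add (hu : ‖u‖ ≤ 1 / 2) : 1 / 2 ≤ ‖1 + u‖ := by
  have := norm_sub_norm_le (1 : 𝕜) (-u)
  rw [norm_one, norm_neg, sub_neg_eq_add] at this
  linarith

theorem one_add_ne_zero_of_norm_le_half (hu : ‖u‖ ≤ 1 / 2) : 1 + u ≠ 0 :=
  norm_pos_iff.mp ((by norm_num : (0 : ℝ) < 1 / 2).trans_le (half_le_norm_one_add hu))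

theorem norm_div_one_add_le (hu : ‖u‖ ≤ 1 / 2) : ‖c / (1 + u)‖ ≤ 2 * ‖c‖ := by
  rw [norm_div, div_le_iff₀ (norm_pos_iff.mpr (one_add_ne_zero_of_norm_le_half hu))]
  nlinarith [half_le_norm_one_add hu, norm_nonneg c]

theorem norm_div_one_add_sub_div_one_add_le (hu : ‖u‖ ≤ 1 / 2) (hv : ‖v‖ ≤ 1 / 2) :
    ‖c / (1 + u) - c / (1 + v)‖ ≤ 4 * ‖c‖ * ‖u - v‖ := by
  have hu' := half_le_norm_one_add hu
  have hv' := half_le_norm_one_add hv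
  rw [div_sub_div _ _ (one_add_ne_zero_of_norm_le_half hu) (one_add_ne_zero_of_norm_le_half hv),
    show c * (1 + v) - (1 + u) * c = -(c * (u - v)) by ring, norm_div, norm_neg, norm_mul,
    norm_mul, div_le_iff₀ (by positivity)]
  have h4 : 1 / 4 ≤ ‖1 + u‖ * ‖1 + v‖ := by nlinarith
  nlinarith [mul_le_mul_of_nonneg_left h4 (mul_nonneg (norm_nonneg c) (norm_nonneg (u - v)))]

end MobiusBounds

theorem tendstoLocallyUniformlyOn_add_atTop_iff {α β : Type*} [TopologicalSpace α]
    [UniformSpace β] {F : ℕ → α → β} {f : α → β} {s : Set α} (c : ℕ) :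
    TendstoLocallyUniformlyOn (fun k ↦ F (k + c)) f atTop s ↔
      TendstoLocallyUniformlyOn F f atTop s := by
  conv_rhs => rw [← map_add_atTop_eq_nat c]
  rfl

theorem tendstoLocallyUniformlyOn_of_forall_exists_mem_nhds {α β ι : Type*}
    [TopologicalSpace α] [UniformSpace β] {F : ι → α → β} {f : α → β} {p : Filter ι}
    {s : Set α} (h : ∀ x ∈ s, ∃ u ∈ 𝓝 x, TendstoLocallyUniformlyOn F f p u) :
    TendstoLocallyUniformlyOn F f p s := by
  intro v hv x hx
  obtain ⟨u, hu, hconv⟩ := h x hx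
  obtain ⟨w, hw, hev⟩ := hconv v hv x (mem_of_mem_nhds hu)
  exact ⟨w, mem_nhdsWithin_of_mem_nhds (nhdsWithin_eq_nhds.mpr hu ▸ hw), hev⟩

noncomputable section

namespace VanVleck

def tailConvergent (b : ℕ → ℂ) : ℕ → ℕ → ℂ → ℂ
  | 0, _, _ => 0
  | k + 1, m, t => b m * t / (1 + tailConvergent b k (m + 1) t)

def tailValue (b : ℕ → ℂ) (m : ℕ) (t : ℂ) : ℂ :=
  limUnder atTop fun k ↦ tailConvergent b k m t

/-- With `‖b j * t‖ ≤ 1/8`, each map `w ↦ b j * t / (1 + w)` sends the disc `‖w‖ ≤ 1/2` into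
itself and is `1/2`-Lipschitz there. -/
def SmallTail (b : ℕ → ℂ) (m : ℕ) (t : ℂ) : Prop :=
  ∀ j, m ≤ j → ‖b j * t‖ ≤ 1 / 8

variable {b : ℕ → ℂ} {m : ℕ} {t : ℂ}

theorem SmallTail.succ (h : SmallTail b m t) : SmallTail b (m + 1) t :=
  fun j hj ↦ h j (by omega)

theorem norm_tailConvergent_le (h : SmallTail b m t) (k : ℕ) :
    ‖tailConvergent b k m t‖ ≤ 1 / 2 := by
  induction k generalizing m with
  | zero => simp [tailConvergent]
  | succ k ih =>
    calc ‖tailConvergent b (k + 1) m t‖ ≤ 2 * ‖b m * t‖ := norm_div_one_add_le (ih h.succ)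
      _ ≤ 1 / 2 := by linarith [h m le_rfl]

theorem dist_tailConvergent_succ_le (h : SmallTail b m t) (k : ℕ) :
    dist (tailConvergent b k m t) (tailConvergent b (k + 1) m t) ≤ 1 / 8 * (1 / 2) ^ k := by
  induction k generalizing m with
  | zero => simpa [tailConvergent, dist_eq_norm] using h m le_rfl
  | succ k ih =>
    rw [dist_eq_norm]
    calc ‖tailConvergent b (k + 1) m t - tailConvergent b (k + 2) m t‖
        ≤ 4 * ‖b m * t‖ * ‖tailConvergent b k (m + 1) t - tailConvergent b (k + 1) (m + 1) t‖ :=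
          norm_div_one_add_sub_div_one_add_le (norm_tailConvergent_le h.succ k)
            (norm_tailConvergent_le h.succ (k + 1))
      _ ≤ 4 * (1 / 8) * (1 / 8 * (1 / 2) ^ k) := by
          rw [← dist_eq_norm]
          gcongr
          exacts [h m le_rfl, ih h.succ]
      _ = 1 / 8 * (1 / 2) ^ (k + 1) := by ring

theorem tendsto_tailConvergent (h : SmallTail b m t) :
    Tendsto (fun k ↦ tailConvergent b k m t) atTop (𝓝 (tailValue b m t)) :=
  (cauchySeq_of_le_geometric _ _ (by norm_num) (dist_tailConvergent_succ_le h)).tendsto_limUnder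

theorem dist_tailConvergent_tailValue_le (h : SmallTail b m t) (k : ℕ) :
    dist (tailConvergent b k m t) (tailValue b m t) ≤ 1 / 4 * (1 / 2) ^ k := by
  have := dist_le_of_le_geometric_of_tendsto (1 / 2) (1 / 8) (by norm_num)
    (dist_tailConvergent_succ_le h) (tendsto_tailConvergent h) k
  convert this using 1
  ring

theorem norm_tailValue_le (h : SmallTail b m t) : ‖tailValue b m t‖ ≤ 1 / 2 :=
  le_of_tendsto (tendsto_tailConvergent h).norm (.of_forall (norm_tailConvergent_le h))

theorem tailValue_mul_one_add (h : SmallTail b m t) :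
    tailValue b m t * (1 + tailValue b (m + 1) t) = b m * t := by
  have hne := one_add_ne_zero_of_norm_le_half (norm_tailValue_le h.succ)
  have hlim : Tendsto (fun k ↦ tailConvergent b (k + 1) m t) atTop
      (𝓝 (b m * t / (1 + tailValue b (m + 1) t))) :=
    tendsto_const_nhds.div (tendsto_const_nhds.add (tendsto_tailConvergent h.succ)) hne
  rw [tendsto_nhds_unique ((tendsto_add_atTop_iff_nat 1).mpr (tendsto_tailConvergent h)) hlim,
    div_mul_cancel₀ _ hne]

theorem tailValue_zero_right (b : ℕ → ℂ) (m : ℕ) : tailValue b m 0 = 0 := by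
  have : ∀ k, tailConvergent b k m 0 = 0 := by
    rintro (_ | _) <;> simp [tailConvergent]
  simpa [tailValue, this] using tendsto_const_nhds.limUnder_eq

section OnSet

variable {s : Set ℂ}

theorem tendstoUniformlyOn_tailConvergent (hs : ∀ t ∈ s, SmallTail b m t) :
    TendstoUniformlyOn (fun k ↦ tailConvergent b k m) (tailValue b m) atTop s := by
  rw [Metric.tendstoUniformlyOn_iff]
  intro ε hε
  have hgeom : Tendsto (fun k : ℕ ↦ 1 / 4 * (1 / 2 : ℝ) ^ k) atTop (𝓝 0) := by
    have := (tendsto_pow_atTop_nhds_zero_of_lt_one (r := (1 / 2 : ℝ)) (by norm_num)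
      (by norm_num)).const_mul (1 / 4)
    rwa [mul_zero] at this
  filter_upwards [hgeom.eventually (gt_mem_nhds hε)] with k hk t ht
  rw [dist_comm]
  exact (dist_tailConvergent_tailValue_le (hs t ht) k).trans_lt hk

theorem differentiableOn_tailConvergent (hs : ∀ t ∈ s, SmallTail b m t) (k : ℕ) :
    DifferentiableOn ℂ (tailConvergent b k m) s := by
  induction k generalizing m with
  | zero => exact differentiableOn_const 0
  | succ k ih =>
    exact ((differentiableOn_const _).mul differentiableOn_id).div
      ((differentiableOn_const 1).add (ih fun t ht ↦ (hs t ht).succ))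
      fun t ht ↦ one_add_ne_zero_of_norm_le_half (norm_tailConvergent_le (hs t ht).succ k)

theorem continuousOn_tailValue (hs : ∀ t ∈ s, SmallTail b m t) :
    ContinuousOn (tailValue b m) s :=
  (tendstoUniformlyOn_tailConvergent hs).continuousOn
    (.of_forall fun k ↦ (differentiableOn_tailConvergent hs k).continuousOn)

theorem differentiableOn_tailValue (hs : ∀ t ∈ s, SmallTail b m t) (hso : IsOpen s) :
    DifferentiableOn ℂ (tailValue b m) s :=
  (tendstoUniformlyOn_tailConvergent hs).tendstoLocallyUniformlyOn.differentiableOn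
    (.of_forall (differentiableOn_tailConvergent hs)) hso

end OnSet

def IsCFRecurrence (b : ℕ → ℂ) (W : ℕ → ℂ → ℂ) : Prop :=
  ∀ n t, W (n + 2) t = W (n + 1) t + b (n + 1) * t * W n t

/-- For `W = U` (resp. `V`), the numerator (resp. denominator) of the continued fraction once the
tail from index `n + 1` is replaced by its value. -/
def withTail (b : ℕ → ℂ) (W : ℕ → ℂ → ℂ) (n : ℕ) (t : ℂ) : ℂ :=
  W (n + 1) t + tailValue b (n + 1) t * W n t

namespace IsCFRecurrence

variable {W : ℕ → ℂ → ℂ} {n : ℕ}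

theorem differentiable (hW : IsCFRecurrence b W) (h0 : Differentiable ℂ (W 0))
    (h1 : Differentiable ℂ (W 1)) (n : ℕ) : Differentiable ℂ (W n) := by
  induction n using Nat.twoStepInduction with
  | zero => exact h0
  | one => exact h1
  | more n ihn ihn1 =>
    rw [show W (n + 2) = _ from funext (hW n)]
    exact ihn1.add ((differentiable_const _).mul differentiable_id |>.mul ihn)

theorem apply_succ_zero (hW : IsCFRecurrence b W) (n : ℕ) : W (n + 1) 0 = W 1 0 := by
  induction n with
  | zero => rfl
  | succ n ih => rw [hW, ih]; ring

/-- One step of the recurrence absorbs one level of the tail. -/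
theorem add_mul_mul_one_add (hW : IsCFRecurrence b W) {g g' : ℂ}
    (hg : g * (1 + g') = b (n + 1) * t) :
    (W (n + 1) t + g * W n t) * (1 + g') = W (n + 2) t + g' * W (n + 1) t := by
  rw [hW]
  linear_combination W n t * hg

theorem withTail_mul_one_add (hW : IsCFRecurrence b W) (h : SmallTail b (n + 1) t) :
    withTail b W n t * (1 + tailValue b (n + 2) t) = withTail b W (n + 1) t :=
  hW.add_mul_mul_one_add (tailValue_mul_one_add h)

end IsCFRecurrence

variable {U V : ℕ → ℂ → ℂ} {n : ℕ} {s : Set ℂ}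

theorem differentiableOn_withTail {W : ℕ → ℂ → ℂ} (hWd : ∀ n, Differentiable ℂ (W n))
    (hs : ∀ t ∈ s, SmallTail b (n + 1) t) (hso : IsOpen s) :
    DifferentiableOn ℂ (withTail b W n) s :=
  (hWd (n + 1)).differentiableOn.add
    ((differentiableOn_tailValue hs hso).mul (hWd n).differentiableOn)

theorem convergent_eq_of_tailConvergent (hU : IsCFRecurrence b U) (hV : IsCFRecurrence b V)
    (h : SmallTail b (n + 1) t) (k : ℕ) :
    U (k + (n + 1)) t / V (k + (n + 1)) t =
      (U (n + 1) t + tailConvergent b k (n + 1) t * U n t) /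
        (V (n + 1) t + tailConvergent b k (n + 1) t * V n t) := by
  induction k generalizing n with
  | zero => simp [tailConvergent]
  | succ k ih =>
    have hne := one_add_ne_zero_of_norm_le_half (norm_tailConvergent_le h.succ k)
    have hg : tailConvergent b (k + 1) (n + 1) t * (1 + tailConvergent b k (n + 2) t) =
        b (n + 1) * t := div_mul_cancel₀ _ hne
    rw [show k + 1 + (n + 1) = k + (n + 1 + 1) by omega, ih h.succ,
      ← hU.add_mul_mul_one_add hg, ← hV.add_mul_mul_one_add hg, mul_div_mul_right _ _ hne]

theorem withTail_eq_zero_iff_of_le (hV : IsCFRecurrence b V) (h : SmallTail b (n + 1) t)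
    {m : ℕ} (hnm : n ≤ m) : withTail b V n t = 0 ↔ withTail b V m t = 0 := by
  induction m, hnm using Nat.le_induction with
  | base => rfl
  | succ m hnm ih =>
    have hsm : SmallTail b (m + 1) t := fun j hj ↦ h j (by omega)
    rw [ih, ← hV.withTail_mul_one_add hsm,
      mul_eq_zero_iff_right (one_add_ne_zero_of_norm_le_half (norm_tailValue_le hsm.succ))]

def exceptionalSet (b : ℕ → ℂ) (V : ℕ → ℂ → ℂ) : Set ℂ :=
  {t | ∃ n, SmallTail b (n + 1) t ∧ withTail b V n t = 0}

theorem mem_exceptionalSet_iff (hV : IsCFRecurrence b V) (h : SmallTail b (n + 1) t) :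
    t ∈ exceptionalSet b V ↔ withTail b V n t = 0 := by
  refine ⟨fun ⟨m, hm, hm0⟩ ↦ ?_, fun h0 ↦ ⟨n, h, h0⟩⟩
  rcases le_total n m with hnm | hmn
  · exact (withTail_eq_zero_iff_of_le hV h hnm).mpr hm0
  · exact (withTail_eq_zero_iff_of_le hV hm hmn).mp hm0

theorem exists_smallTail_on_ball (hb : Tendsto b atTop (𝓝 0)) (R : ℝ) :
    ∃ n, ∀ t ∈ ball (0 : ℂ) R, SmallTail b (n + 1) t := by
  have hlim : Tendsto (fun j ↦ ‖b j‖ * R) atTop (𝓝 0) := by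
    simpa using hb.norm.mul_const R
  obtain ⟨n, hn⟩ :=
    eventually_atTop.mp (hlim.eventually (ge_mem_nhds (by norm_num : (0 : ℝ) < 1 / 8)))
  refine ⟨n, fun t ht j hj ↦ ?_⟩
  rw [mem_ball_zero_iff] at ht
  rw [norm_mul]
  exact (mul_le_mul_of_nonneg_left ht.le (norm_nonneg _)).trans (hn j (by omega))

theorem tendstoLocallyUniformlyOn_convergents (hU : IsCFRecurrence b U)
    (hV : IsCFRecurrence b V) (hUc : ∀ k, Continuous (U k)) (hVc : ∀ k, Continuous (V k))
    (hs : ∀ t ∈ s, SmallTail b (n + 1) t) (hden : ∀ t ∈ s, withTail b V n t ≠ 0) :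
    TendstoLocallyUniformlyOn (fun k t ↦ U k t / V k t)
      (fun t ↦ withTail b U n t / withTail b V n t) atTop s := by
  have hτ := (tendstoUniformlyOn_tailConvergent hs).tendstoLocallyUniformlyOn
  have happrox {W : ℕ → ℂ → ℂ} (hWc : ∀ k, Continuous (W k)) :
      TendstoLocallyUniformlyOn (fun k t ↦ W (n + 1) t + tailConvergent b k (n + 1) t * W n t)
        (withTail b W n) atTop s := by
    have hconst (f : ℂ → ℂ) : TendstoLocallyUniformlyOn (fun _ : ℕ ↦ f) f atTop s :=
      fun u hu _ _ ↦ ⟨s, self_mem_nhdsWithin, .of_forall fun _ _ _ ↦ refl_mem_uniformity hu⟩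
    exact (hconst _).fun_add
      (hτ.fun_mul₀ (hconst _) (continuousOn_tailValue hs) (hWc n).continuousOn)
  rw [← tendstoLocallyUniformlyOn_add_atTop_iff (n + 1)]
  refine ((happrox hUc).fun_div₀ (happrox hVc) ?_ ?_ hden).congr
    fun k t ht ↦ (convergent_eq_of_tailConvergent hU hV (hs t ht) k).symm
  · exact (hUc (n + 1)).continuousOn.add ((continuousOn_tailValue hs).mul (hUc n).continuousOn)
  · exact (hVc (n + 1)).continuousOn.add ((continuousOn_tailValue hs).mul (hVc n).continuousOn)

theorem not_accPt_exceptionalSet (hb : Tendsto b atTop (𝓝 0)) (hV : IsCFRecurrence b V)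
    (hVd : ∀ k, Differentiable ℂ (V k)) (hV1 : V 1 0 ≠ 0) (z : ℂ) :
    ¬ AccPt z (𝓟 (exceptionalSet b V)) := by
  obtain ⟨n, hn⟩ := exists_smallTail_on_ball hb (‖z‖ + 1)
  have hz : z ∈ ball (0 : ℂ) (‖z‖ + 1) := by simp
  have h0 : (0 : ℂ) ∈ ball (0 : ℂ) (‖z‖ + 1) := by simp; positivity
  have han : AnalyticOnNhd ℂ (withTail b V n) (ball 0 (‖z‖ + 1)) :=
    (differentiableOn_withTail hVd hn isOpen_ball).analyticOnNhd isOpen_ball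
  have hden0 : withTail b V n 0 ≠ 0 := by
    simpa [withTail, tailValue_zero_right, hV.apply_succ_zero] using hV1
  have hne : ∀ᶠ t in 𝓝[≠] z, withTail b V n t ≠ 0 :=
    (han z hz).eventually_eq_zero_or_eventually_ne_zero.resolve_left fun hzero ↦
      hden0 (han.eqOn_zero_of_preconnected_of_eventuallyEq_zero
        (convex_ball _ _).isPreconnected hz hzero h0)
  rw [accPt_iff_frequently_nhdsNE, not_frequently]
  filter_upwards [hne, nhdsWithin_le_nhds (isOpen_ball.mem_nhds hz)] with t ht htz
  exact (mem_exceptionalSet_iff hV (hn t htz)).not.mpr ht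

theorem exists_mem_nhds_tendstoLocallyUniformlyOn (hb : Tendsto b atTop (𝓝 0))
    (hU : IsCFRecurrence b U) (hV : IsCFRecurrence b V) (hUd : ∀ k, Differentiable ℂ (U k))
    (hVd : ∀ k, Differentiable ℂ (V k)) {z : ℂ} (hz : z ∉ exceptionalSet b V) :
    ∃ u ∈ 𝓝 z, DifferentiableOn ℂ (fun t ↦ limUnder atTop fun k ↦ U k t / V k t) u ∧
      TendstoLocallyUniformlyOn (fun k t ↦ U k t / V k t)
        (fun t ↦ limUnder atTop fun k ↦ U k t / V k t) atTop u := by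
  obtain ⟨n, hn⟩ := exists_smallTail_on_ball hb (‖z‖ + 1)
  set u := ball (0 : ℂ) (‖z‖ + 1) ∩ {t | withTail b V n t ≠ 0}
  have hzu : z ∈ u :=
    ⟨by simp, (mem_exceptionalSet_iff hV (hn z (by simp))).not.mp hz⟩
  have hdiff : DifferentiableOn ℂ (fun t ↦ withTail b U n t / withTail b V n t) u :=
    ((differentiableOn_withTail hUd hn isOpen_ball).mono Set.inter_subset_left).div
      ((differentiableOn_withTail hVd hn isOpen_ball).mono Set.inter_subset_left) fun _ ht ↦ ht.2
  have hu : IsOpen u :=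
    (differentiableOn_withTail hVd hn isOpen_ball).continuousOn.isOpen_inter_preimage
      isOpen_ball isOpen_ne
  have hconv := tendstoLocallyUniformlyOn_convergents (s := u) hU hV (fun k ↦ (hUd k).continuous)
    (fun k ↦ (hVd k).continuous) (fun t ht ↦ hn t ht.1) fun _ ht ↦ ht.2
  have hlim : u.EqOn (fun t ↦ withTail b U n t / withTail b V n t)
      (fun t ↦ limUnder atTop fun k ↦ U k t / V k t) :=
    fun t ht ↦ ((hconv.tendsto_at ht).limUnder_eq).symm
  exact ⟨u, hu.mem_nhds hzu, hdiff.congr fun t ht ↦ (hlim ht).symm, hconv.congr_right hlim⟩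

end VanVleck

end

open VanVleck

/-- **Van Vleck's extension of Stieltjes' theorem to complex coefficients.** If the
complex coefficients `b_n` of the continued fraction `b₀/(1 + b₁t/(1 + b₂t/(1 + ⋯)))`
tend to `0`, then the convergents `U_n/V_n` converge locally uniformly off a set
`S` with no accumulation point in `ℂ` to a function holomorphic on `ℂ \ S`; thus
the continued fraction converges to a meromorphic function. -/
theorem van_vleck_meromorphic_of_tendsto_zero
    (b : ℕ → ℂ) (hb : Tendsto b atTop (nhds 0))
    (U V : ℕ → ℂ → ℂ)
    (hU0 : ∀ t, U 0 t = 0) (hU1 : ∀ t, U 1 t = b 0)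
    (hV0 : ∀ t, V 0 t = 1) (hV1 : ∀ t, V 1 t = 1)
    (hU : ∀ n t, U (n + 2) t = U (n + 1) t + b (n + 1) * t * U n t)
    (hV : ∀ n t, V (n + 2) t = V (n + 1) t + b (n + 1) * t * V n t) :
    ∃ (S : Set ℂ) (F : ℂ → ℂ),
      (∀ z : ℂ, ¬ AccPt z (Filter.principal S)) ∧
      DifferentiableOn ℂ F Sᶜ ∧
      TendstoLocallyUniformlyOn (fun n t => U n t / V n t) F atTop Sᶜ := by
  have hUd : ∀ k, Differentiable ℂ (U k) := IsCFRecurrence.differentiable hU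
    (funext hU0 ▸ differentiable_const _) (funext hU1 ▸ differentiable_const _)
  have hVd : ∀ k, Differentiable ℂ (V k) := IsCFRecurrence.differentiable hV
    (funext hV0 ▸ differentiable_const _) (funext hV1 ▸ differentiable_const _)
  refine ⟨exceptionalSet b V, fun t ↦ limUnder atTop fun k ↦ U k t / V k t,
    not_accPt_exceptionalSet hb hV hVd (by simp [hV1]), fun z hz ↦ ?_,
    tendstoLocallyUniformlyOn_of_forall_exists_mem_nhds fun z hz ↦ ?_⟩
  · obtain ⟨u, hu, hdiff, -⟩ := exists_mem_nhds_tendstoLocallyUniformlyOn hb hU hV hUd hVd hz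
    exact (hdiff.differentiableAt hu).differentiableWithinAt
  · obtain ⟨u, hu, -, hconv⟩ := exists_mem_nhds_tendstoLocallyUniformlyOn hb hU hV hUd hVd hz
    exact ⟨u, hu, hconv⟩
end
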